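/- arXiv:2002.00087 — 9 statements merged into one kernel-verified Lean document; each statement's English description precedes it below -/
import Mathlib

section
/- Let M₁, M₂, …, M_L be D×D nonsingular integer matrices and let R be an lcrm of M₁, …, M_L. If two integer vectors m, m′ ∈ 𝒩(R) have the same remainders modulo every modulus, i.e., ⟨m⟩_{M_i} = ⟨m′⟩_{M_i} for all 1 ≤ i ≤ L, then m = m′. (Uniqueness part of the MD-CRT for integer vectors.) -/
open Matrix

/-- An integer matrix is unimodular if its determinant is `1` or `-1`. -/
def Unimod {D : ℕ} (U : Matrix (Fin D) (Fin D) ℤ) : Prop := U.det = 1 ∨ U.det = -1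

/-- `C` is a common right multiple (crm) of the family `M`. -/
def IsCRM {D n : ℕ} (M : Fin n → Matrix (Fin D) (Fin D) ℤ)
    (C : Matrix (Fin D) (Fin D) ℤ) : Prop :=
  C.det ≠ 0 ∧ ∀ i, ∃ Q : Matrix (Fin D) (Fin D) ℤ, C = M i * Q

/-- `C` is a least common right multiple (lcrm) of the family `M`. -/
def IsLCRM {D n : ℕ} (M : Fin n → Matrix (Fin D) (Fin D) ℤ)
    (C : Matrix (Fin D) (Fin D) ℤ) : Prop :=
  IsCRM M C ∧ ∀ C', IsCRM M C' → ∃ P : Matrix (Fin D) (Fin D) ℤ, C' = C * P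

/-- `C` is a common left multiple (clm) of the family `M`. -/
def IsCLM {D n : ℕ} (M : Fin n → Matrix (Fin D) (Fin D) ℤ)
    (C : Matrix (Fin D) (Fin D) ℤ) : Prop :=
  C.det ≠ 0 ∧ ∀ i, ∃ Q : Matrix (Fin D) (Fin D) ℤ, C = Q * M i

/-- `C` is a least common left multiple (lclm) of the family `M`. -/
def IsLCLM {D n : ℕ} (M : Fin n → Matrix (Fin D) (Fin D) ℤ)
    (C : Matrix (Fin D) (Fin D) ℤ) : Prop :=
  IsCLM M C ∧ ∀ C', IsCLM M C' → ∃ P : Matrix (Fin D) (Fin D) ℤ, C' = P * C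

/-- `B` is a common left divisor (cld) of the family `M`. -/
def IsCLD {D n : ℕ} (M : Fin n → Matrix (Fin D) (Fin D) ℤ)
    (B : Matrix (Fin D) (Fin D) ℤ) : Prop :=
  B.det ≠ 0 ∧ ∀ i, ∃ K : Matrix (Fin D) (Fin D) ℤ, M i = B * K

/-- `B` is a greatest common left divisor (gcld) of the family `M`:
`B` is a cld, and every cld of the family is a left divisor of `B`. -/
def IsGCLD {D n : ℕ} (M : Fin n → Matrix (Fin D) (Fin D) ℤ)
    (B : Matrix (Fin D) (Fin D) ℤ) : Prop :=
  IsCLD M B ∧ ∀ B', IsCLD M B' → ∃ K : Matrix (Fin D) (Fin D) ℤ, B = B' * K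

/-- `A` and `B` are left coprime: every (nonsingular) common left divisor is unimodular. -/
def LeftCoprime {D : ℕ} (A B : Matrix (Fin D) (Fin D) ℤ) : Prop :=
  ∀ C : Matrix (Fin D) (Fin D) ℤ, C.det ≠ 0 →
    (∃ K, A = C * K) → (∃ K, B = C * K) → Unimod C

/-- `A` and `B` are right coprime: every (nonsingular) common right divisor is unimodular. -/
def RightCoprime {D : ℕ} (A B : Matrix (Fin D) (Fin D) ℤ) : Prop :=
  ∀ C : Matrix (Fin D) (Fin D) ℤ, C.det ≠ 0 →
    (∃ K, A = K * C) → (∃ K, B = K * C) → Unimod C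

/-- `A` and `B` are coprime (for commuting matrices left and right coprimeness coincide). -/
def MatCoprime {D : ℕ} (A B : Matrix (Fin D) (Fin D) ℤ) : Prop :=
  LeftCoprime A B ∧ RightCoprime A B

/-- The lattice generated by an integer matrix `M`: all integer combinations `M n`. -/
def LAT {D : ℕ} (M : Matrix (Fin D) (Fin D) ℤ) : Set (Fin D → ℤ) :=
  {v | ∃ n : Fin D → ℤ, v = M.mulVec n}

/-- `𝒩(M)`: the integer vectors of the form `M x` with `x ∈ [0,1)^D`. -/
def NSet {D : ℕ} (M : Matrix (Fin D) (Fin D) ℤ) : Set (Fin D → ℤ) :=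
  {k | ∃ x : Fin D → ℚ, (∀ j, 0 ≤ x j ∧ x j < 1) ∧
      (M.map (Int.cast : ℤ → ℚ)).mulVec x = fun j => (k j : ℚ)}

/-- `r` is the remainder of `m` modulo `M`: `r ∈ 𝒩(M)` and `m − r ∈ LAT(M)`. -/
def IsRem {D : ℕ} (M : Matrix (Fin D) (Fin D) ℤ) (m r : Fin D → ℤ) : Prop :=
  r ∈ NSet M ∧ (m - r) ∈ LAT M

/-- The Euclidean norm on `ℝ^D`. -/
noncomputable def euclNorm {D : ℕ} (v : Fin D → ℝ) : ℝ := Real.sqrt (∑ j, (v j) ^ 2)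

/-- The lattice generated by a real matrix `M`: all integer combinations `M n`. -/
def LATR {D : ℕ} (M : Matrix (Fin D) (Fin D) ℝ) : Set (Fin D → ℝ) :=
  {v | ∃ n : Fin D → ℤ, v = M.mulVec (fun j => (n j : ℝ))}

/-!
Equal remainders modulo every `M i` put `m - m'` in every lattice `LAT (M i)`. Such a vector lies
in `LAT R`: replacing a column of `R` by it (shifted by a multiple of that column to keep the
determinant nonzero) gives another crm, which `R` left-divides. Finally two points of `𝒩(R)`
differing by `R n` have coordinates `x, x' ∈ [0,1)^D` with `x - x' = n`, so `n = 0`.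
-/

lemma sub_mem_LAT_of_isRem {D : ℕ} {M : Matrix (Fin D) (Fin D) ℤ} {m m' r : Fin D → ℤ}
    (h : IsRem M m r) (h' : IsRem M m' r) : m - m' ∈ LAT M := by
  obtain ⟨a, ha⟩ := h.2
  obtain ⟨b, hb⟩ := h'.2
  exact ⟨a - b, by rw [mulVec_sub, ← ha, ← hb, sub_sub_sub_cancel_right]⟩

section LCRM

variable {D L : ℕ} {M : Fin L → Matrix (Fin D) (Fin D) ℤ} {R : Matrix (Fin D) (Fin D) ℤ}

lemma IsCRM.updateCol (hR : IsCRM M R) (c : Fin D) {v : Fin D → ℤ} (hv : ∀ i, v ∈ LAT (M i))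
    (hdet : (R.updateCol c v).det ≠ 0) : IsCRM M (R.updateCol c v) := by
  refine ⟨hdet, fun i => ?_⟩
  obtain ⟨Q, hQ⟩ := hR.2 i
  obtain ⟨n, hn⟩ := hv i
  exact ⟨Q.updateCol c n, by rw [mul_updateCol, ← hQ, ← hn]⟩

lemma IsCRM.col_mem_LAT (hR : IsCRM M R) (c : Fin D) (i : Fin L) : R.col c ∈ LAT (M i) := by
  obtain ⟨Q, hQ⟩ := hR.2 i
  exact ⟨Q.mulVec (Pi.single c 1), by rw [mulVec_mulVec, ← hQ, mulVec_single_one]⟩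

lemma IsLCRM.mem_LAT_of_det_updateCol_ne_zero (hR : IsLCRM M R) (c : Fin D)
    {v : Fin D → ℤ} (hv : ∀ i, v ∈ LAT (M i)) (hdet : (R.updateCol c v).det ≠ 0) :
    v ∈ LAT R := by
  obtain ⟨P, hP⟩ := hR.2 _ (hR.1.updateCol c hv hdet)
  refine ⟨P.mulVec (Pi.single c 1), ?_⟩
  rw [mulVec_mulVec, ← hP, mulVec_single_one]
  exact funext fun _ => updateCol_self.symm

lemma IsLCRM.mem_LAT_of_forall_mem_LAT (hR : IsLCRM M R) {v : Fin D → ℤ}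
    (hv : ∀ i, v ∈ LAT (M i)) : v ∈ LAT R := by
  rcases isEmpty_or_nonempty (Fin D) with hD | ⟨⟨c⟩⟩
  · exact ⟨0, Subsingleton.elim _ _⟩
  by_cases hdet : (R.updateCol c v).det = 0
  · have hsum : ∀ i, v + R.col c ∈ LAT (M i) := fun i => by
      obtain ⟨a, ha⟩ := hv i
      obtain ⟨b, hb⟩ := hR.1.col_mem_LAT c i
      exact ⟨a + b, by rw [mulVec_add, ← ha, ← hb]⟩
    have hdet' : (R.updateCol c (v + R.col c)).det ≠ 0 := by
      have hR_col : R.updateCol c (R.col c) = R := updateCol_eq_self R c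
      rw [det_updateCol_add, hdet, zero_add, hR_col]
      exact hR.1.1
    obtain ⟨n, hn⟩ := hR.mem_LAT_of_det_updateCol_ne_zero c hsum hdet'
    refine ⟨n - Pi.single c 1, ?_⟩
    rw [mulVec_sub, ← hn, mulVec_single_one, add_sub_cancel_right]
  · exact hR.mem_LAT_of_det_updateCol_ne_zero c hv hdet

end LCRM

lemma eq_of_mem_NSet_of_sub_mem_LAT {D : ℕ} {R : Matrix (Fin D) (Fin D) ℤ} (hR : R.det ≠ 0)
    {m m' : Fin D → ℤ} (hm : m ∈ NSet R) (hm' : m' ∈ NSet R) (hsub : m - m' ∈ LAT R) :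
    m = m' := by
  obtain ⟨x, hx, hxm⟩ := hm
  obtain ⟨x', hx', hxm'⟩ := hm'
  obtain ⟨n, hn⟩ := hsub
  set f := Int.castRingHom ℚ
  have hdet : (R.map f).det ≠ 0 := by
    rw [← f.mapMatrix_apply, ← f.map_det]
    simpa [f] using hR
  have hx_sub : x - x' = f ∘ n := by
    refine mulVec_injective_of_det_ne_zero hdet ?_
    ext j
    rw [mulVec_sub, ← f.map_mulVec, ← hn]
    simp [f, hxm, hxm']
  have hn0 : n = 0 := by
    ext j
    have hj : (n j : ℚ) = x j - x' j := by simpa [f] using (congrFun hx_sub j).symm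
    have hlt : n j < 1 := by exact_mod_cast (show (n j : ℚ) < 1 by linarith [hx j, hx' j])
    have hgt : -1 < n j := by exact_mod_cast (show (-1 : ℚ) < n j by linarith [hx j, hx' j])
    show n j = 0
    omega
  rw [hn0, mulVec_zero] at hn
  exact sub_eq_zero.1 hn

theorem stmt1_general {D L : ℕ}
    (M : Fin L → Matrix (Fin D) (Fin D) ℤ)
    (R : Matrix (Fin D) (Fin D) ℤ) (hR : IsLCRM M R)
    (m m' : Fin D → ℤ) (hm : m ∈ NSet R) (hm' : m' ∈ NSet R)
    (r : Fin L → Fin D → ℤ)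
    (h1 : ∀ i, IsRem (M i) m (r i)) (h2 : ∀ i, IsRem (M i) m' (r i)) :
    m = m' :=
  eq_of_mem_NSet_of_sub_mem_LAT hR.1.1 hm hm'
    (hR.mem_LAT_of_forall_mem_LAT fun i => sub_mem_LAT_of_isRem (h1 i) (h2 i))

/-- uniqueness part of the MD-CRT — two vectors in `𝒩(R)` with the same
remainders modulo every modulus coincide. -/
theorem stmt1 {D L : ℕ} (hL : 1 ≤ L)
    (M : Fin L → Matrix (Fin D) (Fin D) ℤ) (hM : ∀ i, (M i).det ≠ 0)
    (R : Matrix (Fin D) (Fin D) ℤ) (hR : IsLCRM M R)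
    (m m' : Fin D → ℤ) (hm : m ∈ NSet R) (hm' : m' ∈ NSet R)
    (r : Fin L → Fin D → ℤ)
    (h1 : ∀ i, IsRem (M i) m (r i)) (h2 : ∀ i, IsRem (M i) m' (r i)) :
    m = m' :=
  stmt1_general M R hR m m' hm hm' r h1 h2
end

section
/- Let M₁ and M₂ be D×D nonsingular integer matrices, let G₁ be a gcld of M₁ and M₂, and let P₁, P₂ be integer matrices satisfying M₁P₁ + M₂P₂ = G₁. Suppose r₁ and r₂ are the remainders of a common integer vector, i.e., there exists an integer vector m with m ≡ r₁ mod M₁ and m ≡ r₂ mod M₂. Then m₁ = M₂P₂G₁⁻¹r₁ + M₁P₁G₁⁻¹r₂ is an integer vector and satisfies m₁ ≡ r₁ mod M₁ and m₁ ≡ r₂ mod M₂. -/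
open Matrix

/-!
Since `G₁` left-divides `M₁` and `M₂`, the two congruences force `r₁ - r₂ = G₁ s` for an integer
vector `s`. Then `m₁ := r₁ - M₁P₁ s = r₂ + M₂P₂ s` by the Bézout identity, so `m₁` solves both
congruences, and over `ℚ` it equals `M₂P₂G₁⁻¹r₁ + M₁P₁G₁⁻¹r₂` because `s = G₁⁻¹(r₁ - r₂)`.
-/

open Matrix

section Lattice

variable {D : ℕ}

theorem sub_mem_LAT {M : Matrix (Fin D) (Fin D) ℤ} {u v : Fin D → ℤ}
    (hu : u ∈ LAT M) (hv : v ∈ LAT M) : u - v ∈ LAT M := by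
  obtain ⟨a, rfl⟩ := hu
  obtain ⟨b, rfl⟩ := hv
  exact ⟨a - b, (mulVec_sub M a b).symm⟩

theorem LAT_subset_of_eq_mul {M B K : Matrix (Fin D) (Fin D) ℤ} (h : M = B * K) :
    LAT M ⊆ LAT B := by
  rintro _ ⟨n, rfl⟩
  exact ⟨K *ᵥ n, by rw [h, mulVec_mulVec]⟩

theorem sub_mem_LAT_of_isCLD {M₁ M₂ G : Matrix (Fin D) (Fin D) ℤ} (hG : IsCLD ![M₁, M₂] G)
    {m r₁ r₂ : Fin D → ℤ} (hc₁ : m - r₁ ∈ LAT M₁) (hc₂ : m - r₂ ∈ LAT M₂) :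
    r₁ - r₂ ∈ LAT G := by
  obtain ⟨K₁, hK₁⟩ := hG.2 0
  obtain ⟨K₂, hK₂⟩ := hG.2 1
  have h := sub_mem_LAT (LAT_subset_of_eq_mul hK₂ hc₂) (LAT_subset_of_eq_mul hK₁ hc₁)
  rwa [sub_sub_sub_cancel_left] at h

theorem sub_mulVec_sub_mem_LAT_of_bezout {M₁ M₂ G P₁ P₂ : Matrix (Fin D) (Fin D) ℤ}
    (hBez : M₁ * P₁ + M₂ * P₂ = G) {r₁ r₂ s : Fin D → ℤ} (hs : r₁ - r₂ = G *ᵥ s) :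
    r₁ - (M₁ * P₁) *ᵥ s - r₁ ∈ LAT M₁ ∧ r₁ - (M₁ * P₁) *ᵥ s - r₂ ∈ LAT M₂ := by
  refine ⟨⟨-(P₁ *ᵥ s), by rw [mulVec_neg, mulVec_mulVec]; abel⟩, ⟨P₂ *ᵥ s, ?_⟩⟩
  rw [sub_right_comm, hs, ← sub_mulVec, ← hBez, add_sub_cancel_left, mulVec_mulVec]

end Lattice

theorem sub_mulVec_eq_mul_inv_mulVec_add {n R : Type*} [Fintype n] [DecidableEq n] [CommRing R]
    {A B G : Matrix n n R} (hG : IsUnit G.det) (hAB : A + B = G) {r₁ r₂ s : n → R}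
    (hs : r₁ - r₂ = G *ᵥ s) :
    r₁ - A *ᵥ s = (B * G⁻¹) *ᵥ r₁ + (A * G⁻¹) *ᵥ r₂ := by
  have hs' : s = G⁻¹ *ᵥ (r₁ - r₂) := by
    rw [hs, mulVec_mulVec, nonsing_inv_mul _ hG, one_mulVec]
  rw [hs', eq_sub_of_add_eq' hAB]
  simp only [mulVec_sub, sub_mul, mul_nonsing_inv _ hG, sub_mulVec, one_mulVec, mulVec_mulVec]
  abel

theorem intCast_mulVec_apply {m n : Type*} [Fintype n] (A : Matrix m n ℤ) (v : n → ℤ) (i : m) :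
    ((A *ᵥ v) i : ℚ) = (A.map (Int.cast : ℤ → ℚ) *ᵥ fun j => (v j : ℚ)) i :=
  RingHom.map_mulVec (Int.castRingHom ℚ) A v i

theorem stmt2_general {D : ℕ} (M₁ M₂ G₁ P₁ P₂ : Matrix (Fin D) (Fin D) ℤ)
    (hG : IsGCLD ![M₁, M₂] G₁)
    (hBez : M₁ * P₁ + M₂ * P₂ = G₁)
    (m r₁ r₂ : Fin D → ℤ)
    (hc₁ : (m - r₁) ∈ LAT M₁) (hc₂ : (m - r₂) ∈ LAT M₂) :
    ∃ m₁ : Fin D → ℤ,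
      (fun j => (m₁ j : ℚ)) =
        ((M₂ * P₂).map (Int.cast : ℤ → ℚ) * (G₁.map (Int.cast : ℤ → ℚ))⁻¹).mulVec
            (fun j => (r₁ j : ℚ)) +
          ((M₁ * P₁).map (Int.cast : ℤ → ℚ) * (G₁.map (Int.cast : ℤ → ℚ))⁻¹).mulVec
            (fun j => (r₂ j : ℚ)) ∧
      (m₁ - r₁) ∈ LAT M₁ ∧ (m₁ - r₂) ∈ LAT M₂ := by
  obtain ⟨s, hs⟩ := sub_mem_LAT_of_isCLD hG.1 hc₁ hc₂
  refine ⟨r₁ - (M₁ * P₁) *ᵥ s, ?_, sub_mulVec_sub_mem_LAT_of_bezout hBez hs⟩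
  have hdet : IsUnit (G₁.map (Int.cast : ℤ → ℚ)).det := by
    have hcast : ((G₁.det : ℤ) : ℚ) = (G₁.map (Int.cast : ℤ → ℚ)).det :=
      (Int.castRingHom ℚ).map_det G₁
    rw [isUnit_iff_ne_zero, ← hcast]
    exact_mod_cast hG.1.1
  have hBezℚ := congrArg (Matrix.map · (Int.cast : ℤ → ℚ)) hBez
  have hsℚ := congrArg (fun v : Fin D → ℤ => fun j => (v j : ℚ)) hs
  simp only [Matrix.map_add _ Int.cast_add, intCast_mulVec_apply, Pi.sub_apply, Int.cast_sub]
    at hBezℚ hsℚ ⊢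
  exact sub_mulVec_eq_mul_inv_mulVec_add hdet hBezℚ hsℚ

/-- `m₁ = M₂P₂G₁⁻¹r₁ + M₁P₁G₁⁻¹r₂` is an integer vector solving both
congruences `m₁ ≡ r₁ mod M₁`, `m₁ ≡ r₂ mod M₂`. -/
theorem stmt2 {D : ℕ} (M₁ M₂ G₁ P₁ P₂ : Matrix (Fin D) (Fin D) ℤ)
    (h₁ : M₁.det ≠ 0) (h₂ : M₂.det ≠ 0)
    (hG : IsGCLD ![M₁, M₂] G₁)
    (hBez : M₁ * P₁ + M₂ * P₂ = G₁)
    (m r₁ r₂ : Fin D → ℤ)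
    (hc₁ : (m - r₁) ∈ LAT M₁) (hc₂ : (m - r₂) ∈ LAT M₂) :
    ∃ m₁ : Fin D → ℤ,
      (fun j => (m₁ j : ℚ)) =
        ((M₂ * P₂).map (Int.cast : ℤ → ℚ) * (G₁.map (Int.cast : ℤ → ℚ))⁻¹).mulVec
            (fun j => (r₁ j : ℚ)) +
          ((M₁ * P₁).map (Int.cast : ℤ → ℚ) * (G₁.map (Int.cast : ℤ → ℚ))⁻¹).mulVec
            (fun j => (r₂ j : ℚ)) ∧
      (m₁ - r₁) ∈ LAT M₁ ∧ (m₁ - r₂) ∈ LAT M₂ :=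
  stmt2_general M₁ M₂ G₁ P₁ P₂ hG hBez m r₁ r₂ hc₁ hc₂
end

section
/- Let N₁, N₂, …, N_L be D×D nonsingular integer matrices that are pairwise commutative and pairwise coprime. Then for any subset {i₁,…,i_p} ⊂ {1,…,L} and any subset {j₁,…,j_q} ⊂ {1,…,L} ∖ {i₁,…,i_p}, the products N_{i₁}N_{i₂}⋯N_{i_p} and N_{j₁}N_{j₂}⋯N_{j_q} are commutative and coprime. -/
open Matrix

/-!
For a nonsingular integer matrix `A`, left coprimeness of `A` and `B` is equivalent to a Bezout
identity `A X + B Y = 1`. Such identities multiply: from `a x₁ + b y₁ = 1` and `a x₂ + c y₂ = 1`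
with `a b = b a` one gets `a x + b c y = 1`, so by induction the products over disjoint index sets
satisfy a Bezout identity, hence are left coprime. Right coprimeness is left coprimeness of the
transposes, and transposition only reverses the order of the (commuting) factors.
-/

/-- `a R + b R = R`: for square matrices this is the Bezout identity `A X + B Y = 1`
certifying left coprimeness. -/
def LeftBezout {R : Type*} [Semiring R] (a b : R) : Prop := ∃ x y : R, a * x + b * y = 1

namespace LeftBezout

variable {R : Type*} [Semiring R] {a b c : R}

theorem symm (h : LeftBezout a b) : LeftBezout b a :=
  let ⟨x, y, hxy⟩ := h
  ⟨y, x, by rw [add_comm, hxy]⟩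

theorem one_left (b : R) : LeftBezout 1 b := ⟨1, 0, by simp⟩

theorem one_right (a : R) : LeftBezout a 1 := (one_left a).symm

/-- Substitute `b = b (a x₂ + c y₂)` into `a x₁ + b y₁ = 1` and move `a` past `b`. -/
theorem mul_right (hb : LeftBezout a b) (hc : LeftBezout a c) (hab : Commute a b) :
    LeftBezout a (b * c) := by
  obtain ⟨x₁, y₁, h₁⟩ := hb
  obtain ⟨x₂, y₂, h₂⟩ := hc
  refine ⟨x₁ + b * x₂ * y₁, y₂ * y₁, ?_⟩
  calc a * (x₁ + b * x₂ * y₁) + b * c * (y₂ * y₁)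
      = a * x₁ + a * b * x₂ * y₁ + b * c * y₂ * y₁ := by simp only [mul_add, mul_assoc]
    _ = a * x₁ + b * (a * x₂ + c * y₂) * y₁ := by
        rw [hab.eq]; simp only [mul_add, add_mul, mul_assoc, add_assoc]
    _ = 1 := by rw [h₂, mul_one, h₁]

theorem mul_left (ha : LeftBezout a c) (hb : LeftBezout b c) (hac : Commute a c) :
    LeftBezout (a * b) c :=
  (mul_right ha.symm hb.symm hac.symm).symm

theorem list_prod_right {l : List R} (h : ∀ b ∈ l, LeftBezout a b)
    (hc : ∀ b ∈ l, Commute a b) : LeftBezout a l.prod := by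
  induction l with
  | nil => exact one_right a
  | cons b l ih =>
    simp only [List.mem_cons, forall_eq_or_imp] at h hc
    exact mul_right h.1 (ih h.2 hc.2) hc.1

theorem list_prod {l m : List R} (h : ∀ a ∈ l, ∀ b ∈ m, LeftBezout a b)
    (hc : ∀ a ∈ l, ∀ b ∈ m, Commute a b) : LeftBezout l.prod m.prod := by
  induction l with
  | nil => exact one_left _
  | cons a l ih =>
    simp only [List.mem_cons, forall_eq_or_imp] at h hc
    exact mul_left (list_prod_right h.1 hc.1) (ih h.2 hc.2) (Commute.list_prod_right _ _ hc.1)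

end LeftBezout

theorem Matrix.exists_mul_eq_of_range_le {R m n k : Type*} [CommRing R] [Fintype n] [Fintype k]
    [DecidableEq n] {A : Matrix m n R} {C : Matrix m k R}
    (h : LinearMap.range A.mulVecLin ≤ LinearMap.range C.mulVecLin) :
    ∃ K : Matrix k n R, A = C * K := by
  obtain ⟨K, hK⟩ := Module.projective_lifting_property C.mulVecLin.rangeRestrict
    (A.mulVecLin.codRestrict _ fun v => h ⟨v, rfl⟩) C.mulVecLin.surjective_rangeRestrict
  refine ⟨LinearMap.toMatrix' K, mulVec_injective (funext fun v => ?_)⟩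
  rw [← mulVec_mulVec, LinearMap.toMatrix'_mulVec]
  exact congrArg Subtype.val (LinearMap.congr_fun hK v).symm

theorem Matrix.range_mulVecLin_fromCols {R m n₁ n₂ : Type*} [CommRing R] [Fintype n₁]
    [Fintype n₂] (A : Matrix m n₁ R) (B : Matrix m n₂ R) :
    LinearMap.range (fromCols A B).mulVecLin =
      LinearMap.range A.mulVecLin ⊔ LinearMap.range B.mulVecLin := by
  have hcol : (fromCols A B).col = Sum.elim A.col B.col := by ext (j | j) i <;> rfl
  rw [range_mulVecLin, range_mulVecLin, range_mulVecLin, hcol, Set.Sum.elim_range,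
    Submodule.span_union]

theorem Matrix.finrank_range_sup_of_det_ne_zero {R n k : Type*} [CommRing R] [IsDomain R]
    [Fintype n] [DecidableEq n] [Fintype k] {A : Matrix n n R} (hA : A.det ≠ 0)
    (B : Matrix n k R) :
    Module.finrank R ↥(LinearMap.range A.mulVecLin ⊔ LinearMap.range B.mulVecLin) =
      Fintype.card n := by
  refine le_antisymm ((Submodule.finrank_le _).trans_eq (Module.finrank_fintype_fun_eq_card R))
    ?_
  rw [← rank_of_det_ne_zero hA]
  exact Submodule.finrank_mono le_sup_left

theorem Matrix.exists_range_mulVecLin_eq {R n : Type*} [CommRing R] [IsDomain R]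
    [IsPrincipalIdealRing R] [Fintype n] [DecidableEq n] {S : Submodule R (n → R)}
    (hS : Module.finrank R S = Fintype.card n) :
    ∃ C : Matrix n n R, LinearMap.range C.mulVecLin = S := by
  let b := (Module.finBasisOfFinrankEq R S hS).reindex (Fintype.equivFin n).symm
  refine ⟨LinearMap.toMatrix' (S.subtype ∘ₗ b.equivFun.symm.toLinearMap), ?_⟩
  rw [← Matrix.toLin'_apply', Matrix.toLin'_toMatrix',
    LinearMap.range_comp_of_range_eq_top _ b.equivFun.symm.range, Submodule.range_subtype]

section IntegerMatrices

variable {D : ℕ}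

theorem unimod_of_mul_eq_one {C K : Matrix (Fin D) (Fin D) ℤ} (h : C * K = 1) : Unimod C :=
  Int.isUnit_iff.mp (IsUnit.of_mul_eq_one K.det (by rw [← det_mul, h, det_one]))

theorem LeftBezout.leftCoprime {A B : Matrix (Fin D) (Fin D) ℤ} (h : LeftBezout A B) :
    LeftCoprime A B := by
  obtain ⟨X, Y, hXY⟩ := h
  rintro C - ⟨KA, rfl⟩ ⟨KB, rfl⟩
  exact unimod_of_mul_eq_one (C := C) (K := KA * X + KB * Y) (by
    rw [mul_add, ← mul_assoc, ← mul_assoc, hXY])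

/-- The columns of `A` and `B` span a full-rank lattice; its basis matrix `C` is a common left
divisor, hence unimodular, so the lattice is all of `ℤᴰ` and `[A B]` has a right inverse. -/
theorem LeftCoprime.leftBezout {A B : Matrix (Fin D) (Fin D) ℤ} (hA : A.det ≠ 0)
    (h : LeftCoprime A B) : LeftBezout A B := by
  obtain ⟨C, hC⟩ := exists_range_mulVecLin_eq (finrank_range_sup_of_det_ne_zero hA B)
  obtain ⟨KA, hKA⟩ := exists_mul_eq_of_range_le (hC ▸ le_sup_left)
  obtain ⟨KB, hKB⟩ := exists_mul_eq_of_range_le (hC ▸ le_sup_right)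
  have hCdet : C.det ≠ 0 := fun h0 => hA (by rw [hKA, det_mul, h0, zero_mul])
  have hCunit : IsUnit C :=
    (isUnit_iff_isUnit_det C).mpr (Int.isUnit_iff.mpr (h C hCdet ⟨KA, hKA⟩ ⟨KB, hKB⟩))
  have hspan : LinearMap.range (fromCols A B).mulVecLin = ⊤ := by
    rw [range_mulVecLin_fromCols, ← hC, LinearMap.range_eq_top]
    exact mulVec_surjective_iff_isUnit.mpr hCunit
  obtain ⟨K, hK⟩ := exists_mul_eq_of_range_le (A := (1 : Matrix (Fin D) (Fin D) ℤ))
    (hspan ▸ le_top)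
  exact ⟨K.toRows₁, K.toRows₂, by rw [← fromCols_mul_fromRows, fromRows_toRows, hK]⟩

theorem leftCoprime_transpose_iff {A B : Matrix (Fin D) (Fin D) ℤ} :
    LeftCoprime Aᵀ Bᵀ ↔ RightCoprime A B := by
  have hdvd (M C : Matrix (Fin D) (Fin D) ℤ) : (∃ K, Mᵀ = Cᵀ * K) ↔ ∃ K, M = K * C :=
    ⟨fun ⟨K, hK⟩ => ⟨Kᵀ, by rw [← transpose_transpose M, hK, transpose_mul, transpose_transpose]⟩,
      fun ⟨K, hK⟩ => ⟨Kᵀ, by rw [hK, transpose_mul]⟩⟩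
  have hunimod (C : Matrix (Fin D) (Fin D) ℤ) : Unimod Cᵀ ↔ Unimod C := by
    rw [Unimod, Unimod, det_transpose]
  refine ⟨fun h C hC hA hB => ?_, fun h C hC hA hB => ?_⟩
  · exact (hunimod C).mp (h Cᵀ (by rwa [det_transpose]) ((hdvd A C).mpr hA) ((hdvd B C).mpr hB))
  · rw [← transpose_transpose C] at hA hB
    exact (hunimod C).mp (h Cᵀ (by rwa [det_transpose]) ((hdvd A _).mp hA) ((hdvd B _).mp hB))

theorem leftCoprime_list_prod {l m : List (Matrix (Fin D) (Fin D) ℤ)}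
    (hl : ∀ A ∈ l, A.det ≠ 0) (hcop : ∀ A ∈ l, ∀ B ∈ m, LeftCoprime A B)
    (hcomm : ∀ A ∈ l, ∀ B ∈ m, Commute A B) : LeftCoprime l.prod m.prod :=
  LeftBezout.leftCoprime <|
    LeftBezout.list_prod (fun A hA B hB => (hcop A hA B hB).leftBezout (hl A hA)) hcomm

theorem rightCoprime_list_prod {l m : List (Matrix (Fin D) (Fin D) ℤ)}
    (hl : ∀ A ∈ l, A.det ≠ 0) (hcop : ∀ A ∈ l, ∀ B ∈ m, RightCoprime A B)
    (hcomm : ∀ A ∈ l, ∀ B ∈ m, Commute A B) : RightCoprime l.prod m.prod := by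
  rw [← leftCoprime_transpose_iff, transpose_list_prod, transpose_list_prod]
  refine leftCoprime_list_prod ?_ ?_ ?_ <;>
    simp only [List.mem_reverse, List.forall_mem_map]
  · exact fun A hA => by rw [det_transpose]; exact hl A hA
  · exact fun A hA B hB => leftCoprime_transpose_iff.mpr (hcop A hA B hB)
  · exact fun A hA B hB => by
      rw [Commute, SemiconjBy, ← transpose_mul, ← (hcomm A hA B hB).eq, transpose_mul]

end IntegerMatrices

theorem stmt4_general {D L : ℕ} (N : Fin L → Matrix (Fin D) (Fin D) ℤ)
    (hns : ∀ i, (N i).det ≠ 0)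
    (hcomm : ∀ i j, N i * N j = N j * N i)
    (hcop : ∀ i j, i ≠ j → MatCoprime (N i) (N j))
    (s t : List (Fin L))
    (hst : ∀ i ∈ s, i ∉ t) :
    (s.map N).prod * (t.map N).prod = (t.map N).prod * (s.map N).prod ∧
      MatCoprime ((s.map N).prod) ((t.map N).prod) := by
  have hdet : ∀ A ∈ s.map N, A.det ≠ 0 := List.forall_mem_map.mpr fun i _ => hns i
  have hcomm' : ∀ A ∈ s.map N, ∀ B ∈ t.map N, Commute A B := by
    simp only [List.forall_mem_map]
    exact fun i _ j _ => hcomm i j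
  have hcop' : ∀ A ∈ s.map N, ∀ B ∈ t.map N, MatCoprime A B := by
    simp only [List.forall_mem_map]
    exact fun i hi j hj => hcop i j fun hij => hst i hi (hij ▸ hj)
  exact ⟨(Commute.list_prod_left _ _ fun A hA => Commute.list_prod_right _ _ (hcomm' A hA)).eq,
    leftCoprime_list_prod hdet (fun A hA B hB => (hcop' A hA B hB).1) hcomm',
    rightCoprime_list_prod hdet (fun A hA B hB => (hcop' A hA B hB).2) hcomm'⟩

/-- products over disjoint subsets of a pairwise commutative and coprime
family are commutative and coprime. -/
theorem stmt4 {D L : ℕ} (N : Fin L → Matrix (Fin D) (Fin D) ℤ)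
    (hns : ∀ i, (N i).det ≠ 0)
    (hcomm : ∀ i j, N i * N j = N j * N i)
    (hcop : ∀ i j, i ≠ j → MatCoprime (N i) (N j))
    (s t : List (Fin L)) (hs : s.Nodup) (ht : t.Nodup)
    (hst : ∀ i ∈ s, i ∉ t) :
    (s.map N).prod * (t.map N).prod = (t.map N).prod * (s.map N).prod ∧
      MatCoprime ((s.map N).prod) ((t.map N).prod) :=
  stmt4_general N hns hcomm hcop s t hst
end

section
/- Let N₁, N₂, …, N_L be D×D nonsingular integer matrices that are pairwise commutative and pairwise coprime. Then for any subset {i₁,…,i_p} ⊂ {1,…,L} with p ≥ 2, the product N_{i₁}N_{i₂}⋯N_{i_p} is both a least common right multiple and a least common left multiple of N_{i₁}, N_{i₂}, …, N_{i_p}. -/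
open Matrix

/-!
Left coprimeness yields a Bézout identity `A X + B Y = 1`: the lattice spanned by the columns of
`A` and `B` is the column lattice of a single matrix `G`, which is then a common left divisor,
hence unimodular, and lies in that lattice. Transposing turns right coprimeness into
`X A + Y B = 1`. For commuting nonsingular `A`, `B` with `X A + Y B = 1`, a common right multiple
`C = A Qa = B Qb` satisfies `C = A B (X Qb + Y Qa)` (checked over `ℚ`, where `A`, `B` are
invertible). Bézout identities propagate to products of a commuting family, so induction along
the list shows that the product is an lcrm; the lclm statement is the lcrm statement for the
transposed family.
-/

theorem LinearMap.exists_comp_eq_of_range_le {R M N P : Type*} [Ring R] [AddCommGroup M]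
    [AddCommGroup N] [AddCommGroup P] [Module R M] [Module R N] [Module R P]
    [Module.Projective R P] {f : P →ₗ[R] M} {g : N →ₗ[R] M}
    (h : LinearMap.range f ≤ LinearMap.range g) : ∃ l : P →ₗ[R] N, g ∘ₗ l = f := by
  obtain ⟨l, hl⟩ := Module.projective_lifting_property g.rangeRestrict
    (f.codRestrict _ fun x => h ⟨x, rfl⟩) g.surjective_rangeRestrict
  refine ⟨l, LinearMap.ext fun x => ?_⟩
  simpa using congrArg Subtype.val (LinearMap.congr_fun hl x)

section Divisibility

variable {R : Type*} [CommRing R] {m n k : Type*} [Fintype n] [DecidableEq n] [Fintype k]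
  [DecidableEq k]

theorem Matrix.exists_eq_mul_of_range_le {A : Matrix m n R} {G : Matrix m k R}
    (h : LinearMap.range (toLin' A) ≤ LinearMap.range (toLin' G)) :
    ∃ K : Matrix k n R, A = G * K := by
  obtain ⟨l, hl⟩ := LinearMap.exists_comp_eq_of_range_le h
  refine ⟨LinearMap.toMatrix' l, toLin'.injective ?_⟩
  rw [toLin'_mul, toLin'_toMatrix', hl]

theorem Matrix.exists_eq_mul_add_mul_of_range_le {A B : Matrix m n R} {G : Matrix m k R}
    (h : LinearMap.range (toLin' G) ≤ LinearMap.range (toLin' A) ⊔ LinearMap.range (toLin' B)) :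
    ∃ X Y : Matrix n k R, G = A * X + B * Y := by
  rw [← LinearMap.range_coprod] at h
  obtain ⟨l, hl⟩ := LinearMap.exists_comp_eq_of_range_le h
  refine ⟨LinearMap.toMatrix' (LinearMap.fst R _ _ ∘ₗ l),
    LinearMap.toMatrix' (LinearMap.snd R _ _ ∘ₗ l), toLin'.injective ?_⟩
  rw [map_add, toLin'_mul, toLin'_mul, toLin'_toMatrix', toLin'_toMatrix', ← hl]
  exact LinearMap.ext fun x => by simp

end Divisibility

theorem Submodule.exists_range_toLin'_eq {R n : Type*} [CommRing R] [IsDomain R]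
    [IsPrincipalIdealRing R] [Fintype n] [DecidableEq n] (Λ : Submodule R (n → R)) :
    ∃ G : Matrix n n R, LinearMap.range (toLin' G) = Λ := by
  obtain ⟨r, b⟩ := Λ.basisOfPid (Pi.basisFun R n)
  have hr : r ≤ Fintype.card n := by
    simpa [Module.finrank_eq_card_basis b] using Submodule.finrank_le Λ
  let e : Fin r → n := (Fintype.equivFin n).symm ∘ Fin.castLE hr
  have he : Function.Injective e :=
    (Fintype.equivFin n).symm.injective.comp (Fin.castLE_injective hr)
  -- `G` sends the coordinates indexed by `e` to the basis `b` of `Λ` and ignores the others.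
  refine ⟨LinearMap.toMatrix'
    (Λ.subtype ∘ₗ b.equivFun.symm.toLinearMap ∘ₗ LinearMap.funLeft R R e), ?_⟩
  rw [toLin'_toMatrix', LinearMap.range_comp_of_range_eq_top, Submodule.range_subtype]
  rw [LinearMap.range_eq_top]
  exact b.equivFun.symm.surjective.comp (LinearMap.funLeft_surjective_of_injective R R e he)

section Transpose

variable {n R : Type*} [Fintype n] [CommRing R] {A B : Matrix n n R}

theorem Commute.transpose (h : Commute A B) : Commute Aᵀ Bᵀ := by
  rw [Commute, SemiconjBy, ← transpose_mul, ← transpose_mul, h.eq]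

theorem exists_mul_transpose_add_mul_transpose_eq_one [DecidableEq n]
    (h : ∃ X Y : Matrix n n R, A * X + B * Y = 1) :
    ∃ X Y : Matrix n n R, X * Aᵀ + Y * Bᵀ = 1 := by
  obtain ⟨X, Y, hXY⟩ := h
  refine ⟨Xᵀ, Yᵀ, ?_⟩
  rw [← transpose_mul, ← transpose_mul, ← transpose_add, hXY, transpose_one]

end Transpose

section Coprime

variable {D : ℕ} {A B : Matrix (Fin D) (Fin D) ℤ}

theorem LeftCoprime.exists_mul_add_mul_eq_one (hA : A.det ≠ 0) (h : LeftCoprime A B) :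
    ∃ X Y : Matrix (Fin D) (Fin D) ℤ, A * X + B * Y = 1 := by
  obtain ⟨G, hG⟩ :=
    (LinearMap.range (toLin' A) ⊔ LinearMap.range (toLin' B)).exists_range_toLin'_eq
  obtain ⟨KA, hKA⟩ := exists_eq_mul_of_range_le (hG ▸ le_sup_left)
  obtain ⟨KB, hKB⟩ := exists_eq_mul_of_range_le (hG ▸ le_sup_right)
  have hG₀ : G.det ≠ 0 := fun h₀ => hA (by rw [hKA, det_mul, h₀, zero_mul])
  obtain ⟨u, rfl⟩ : IsUnit G :=
    (isUnit_iff_isUnit_det G).2 (Int.isUnit_iff.2 (h G hG₀ ⟨KA, hKA⟩ ⟨KB, hKB⟩))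
  obtain ⟨X, Y, hXY⟩ := exists_eq_mul_add_mul_of_range_le hG.le
  refine ⟨X * u.inv, Y * u.inv, ?_⟩
  rw [← Matrix.mul_assoc, ← Matrix.mul_assoc, ← add_mul, ← hXY, u.val_inv]

theorem RightCoprime.transpose (h : RightCoprime A B) : LeftCoprime Aᵀ Bᵀ := by
  rintro C hC ⟨K, hK⟩ ⟨K', hK'⟩
  have hCt := h Cᵀ (by rwa [det_transpose])
    ⟨Kᵀ, by rw [← transpose_mul, ← hK, transpose_transpose]⟩
    ⟨K'ᵀ, by rw [← transpose_mul, ← hK', transpose_transpose]⟩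
  rwa [Unimod, det_transpose] at hCt

theorem RightCoprime.exists_mul_add_mul_eq_one (hA : A.det ≠ 0) (h : RightCoprime A B) :
    ∃ X Y : Matrix (Fin D) (Fin D) ℤ, X * A + Y * B = 1 := by
  simpa using exists_mul_transpose_add_mul_transpose_eq_one
    (h.transpose.exists_mul_add_mul_eq_one (by rwa [det_transpose]))

end Coprime

theorem Commute.eq_mul_mul_add_mul_of_isUnit {R : Type*} [Ring R] {a b c x y qa qb : R}
    (hab : Commute a b) (ha : IsUnit a) (hb : IsUnit b) (hxy : x * a + y * b = 1)
    (hqa : c = a * qa) (hqb : c = b * qb) : c = a * b * (x * qb + y * qa) := by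
  obtain ⟨u, rfl⟩ := ha
  obtain ⟨v, rfl⟩ := hb
  have hvu : v * u = u * v := Units.ext hab.eq.symm
  rw [(Units.eq_inv_mul_iff_mul_eq u).2 hqa.symm, (Units.eq_inv_mul_iff_mul_eq v).2 hqb.symm]
  have key : x * ↑v⁻¹ + y * ↑u⁻¹ = ↑(u * v)⁻¹ :=
    calc x * ↑v⁻¹ + y * ↑u⁻¹ = x * u * ↑(v * u)⁻¹ + y * v * ↑(u * v)⁻¹ := by
          simp [mul_assoc]
      _ = ↑(u * v)⁻¹ := by rw [hvu, ← add_mul, hxy, one_mul]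
  rw [← mul_assoc x, ← mul_assoc y, ← add_mul, key, ← Units.val_mul, ← mul_assoc,
    Units.mul_inv, one_mul]

theorem Matrix.mul_dvd_of_commute {n : Type*} [Fintype n] [DecidableEq n]
    {A B C X Y : Matrix n n ℤ} (hA : A.det ≠ 0) (hB : B.det ≠ 0) (hAB : Commute A B)
    (hXY : X * A + Y * B = 1) (hAC : A ∣ C) (hBC : B ∣ C) : A * B ∣ C := by
  obtain ⟨Qa, hQa⟩ := hAC
  obtain ⟨Qb, hQb⟩ := hBC
  let φ := (Int.castRingHom ℚ).mapMatrix (m := n)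
  have hφ : ∀ {M : Matrix n n ℤ}, M.det ≠ 0 → IsUnit (φ M) := fun hM =>
    (isUnit_iff_isUnit_det _).2 <| by
      rw [← RingHom.map_det]
      exact isUnit_iff_ne_zero.2 (by simpa)
  have key := (hAB.map φ).eq_mul_mul_add_mul_of_isUnit (hφ hA) (hφ hB)
    (by simpa using congrArg φ hXY) (by simpa using congrArg φ hQa)
    (by simpa using congrArg φ hQb)
  have hφinj : Function.Injective φ := map_injective Int.cast_injective
  exact ⟨X * Qb + Y * Qa, hφinj (by simpa only [map_mul, map_add] using key)⟩

theorem exists_mul_add_mul_mul_eq_one {R : Type*} [Ring R] {a b c x₁ y₁ x₂ y₂ : R}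
    (hab : Commute a b) (h₁ : x₁ * a + y₁ * b = 1) (h₂ : x₂ * a + y₂ * c = 1) :
    ∃ x y : R, x * a + y * (c * b) = 1 := by
  refine ⟨x₁ + y₁ * x₂ * b, y₁ * y₂, ?_⟩
  calc (x₁ + y₁ * x₂ * b) * a + y₁ * y₂ * (c * b)
      = x₁ * a + y₁ * ((x₂ * a + y₂ * c) * b) := by
        rw [add_mul, mul_assoc (y₁ * x₂), ← hab.eq]; noncomm_ring
    _ = 1 := by rw [h₂, one_mul, h₁]

theorem List.dvd_prod_of_pairwise_commute {M : Type*} [Monoid M] {l : List M}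
    (hl : l.Pairwise Commute) {a : M} (ha : a ∈ l) : a ∣ l.prod := by
  classical
  rw [(List.perm_cons_erase ha).prod_eq' hl, List.prod_cons]
  exact dvd_mul_right _ _

section CommutingFamily

variable {ι R : Type*} [Ring R] {N : ι → R}

theorem exists_mul_add_mul_list_prod_map_eq_one (hcomm : ∀ i j, Commute (N i) (N j))
    (hbez : ∀ i j, i ≠ j → ∃ x y : R, x * N i + y * N j = 1) {i : ι} :
    ∀ {s : List ι}, i ∉ s → ∃ x y : R, x * N i + y * (s.map N).prod = 1
  | [], _ => ⟨0, 1, by simp⟩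
  | j :: t, hi => by
    rw [List.mem_cons, not_or] at hi
    obtain ⟨x₁, y₁, h₁⟩ := hbez i j hi.1
    obtain ⟨x₂, y₂, h₂⟩ := exists_mul_add_mul_list_prod_map_eq_one hcomm hbez hi.2
    rw [List.map_cons, List.prod_cons,
      (Commute.list_prod_right _ _ fun _ hk => ?_ : Commute (N j) _).eq]
    · exact exists_mul_add_mul_mul_eq_one (hcomm i j) h₁ h₂
    · obtain ⟨k, -, rfl⟩ := List.mem_map.1 hk
      exact hcomm j k

end CommutingFamily

section IntegerFamily

variable {D : ℕ} {ι : Type*} {N : ι → Matrix (Fin D) (Fin D) ℤ}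

theorem det_list_prod_map_ne_zero (hns : ∀ i, (N i).det ≠ 0) (s : List ι) :
    ((s.map N).prod).det ≠ 0 := by
  induction s with
  | nil => simp
  | cons i t ih => simpa [det_mul] using ⟨hns i, ih⟩

theorem list_prod_map_dvd_of_forall_dvd (hns : ∀ i, (N i).det ≠ 0)
    (hcomm : ∀ i j, Commute (N i) (N j))
    (hbez : ∀ i j, i ≠ j → ∃ X Y : Matrix (Fin D) (Fin D) ℤ, X * N i + Y * N j = 1)
    {C : Matrix (Fin D) (Fin D) ℤ} : ∀ {s : List ι}, s.Nodup → (∀ i ∈ s, N i ∣ C) →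
      (s.map N).prod ∣ C
  | [], _, _ => one_dvd C
  | i :: t, hs, hC => by
    rw [List.nodup_cons] at hs
    obtain ⟨X, Y, hXY⟩ := exists_mul_add_mul_list_prod_map_eq_one hcomm hbez hs.1
    rw [List.map_cons, List.prod_cons]
    refine mul_dvd_of_commute (hns i) (det_list_prod_map_ne_zero hns t) ?_ hXY
      (hC i List.mem_cons_self)
      (list_prod_map_dvd_of_forall_dvd hns hcomm hbez hs.2 fun j hj => hC j (.tail i hj))
    exact Commute.list_prod_right _ _ fun _ hk => by
      obtain ⟨k, -, rfl⟩ := List.mem_map.1 hk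
      exact hcomm i k

theorem isCRM_list_get_iff (s : List ι) (C : Matrix (Fin D) (Fin D) ℤ) :
    IsCRM (fun k : Fin s.length => N (s.get k)) C ↔ C.det ≠ 0 ∧ ∀ i ∈ s, N i ∣ C := by
  rw [List.forall_mem_iff_get]
  rfl

theorem isLCRM_list_prod_map (hns : ∀ i, (N i).det ≠ 0) (hcomm : ∀ i j, Commute (N i) (N j))
    (hbez : ∀ i j, i ≠ j → ∃ X Y : Matrix (Fin D) (Fin D) ℤ, X * N i + Y * N j = 1)
    {s : List ι} (hs : s.Nodup) :
    IsLCRM (fun k : Fin s.length => N (s.get k)) (s.map N).prod := by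
  refine ⟨(isCRM_list_get_iff s _).2 ⟨det_list_prod_map_ne_zero hns s, fun i hi => ?_⟩,
    fun C hC => ?_⟩
  · exact List.dvd_prod_of_pairwise_commute (List.pairwise_map.2 (List.pairwise_of_forall hcomm))
      (List.mem_map_of_mem hi)
  · exact list_prod_map_dvd_of_forall_dvd hns hcomm hbez hs ((isCRM_list_get_iff s C).1 hC).2

theorem transpose_list_prod_map (hcomm : ∀ i j, Commute (N i) (N j)) (s : List ι) :
    ((s.map N).prod)ᵀ = (s.map fun i => (N i)ᵀ).prod := by
  rw [transpose_list_prod, List.map_map]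
  refine (List.reverse_perm _).prod_eq' (List.pairwise_reverse.2 ?_)
  exact List.pairwise_map.2 (List.pairwise_of_forall fun i j => (hcomm j i).transpose)

end IntegerFamily

theorem isLCLM_of_isLCRM_transpose {D n : ℕ} {M : Fin n → Matrix (Fin D) (Fin D) ℤ}
    {C : Matrix (Fin D) (Fin D) ℤ} (h : IsLCRM (fun i => (M i)ᵀ) Cᵀ) : IsLCLM M C := by
  obtain ⟨⟨hdet, hdvd⟩, hmin⟩ := h
  refine ⟨⟨by rwa [det_transpose] at hdet, fun i => ?_⟩, fun C' ⟨hC', hdvd'⟩ => ?_⟩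
  · obtain ⟨Q, hQ⟩ := hdvd i
    exact ⟨Qᵀ, by rw [← transpose_transpose C, hQ, transpose_mul, transpose_transpose]⟩
  · obtain ⟨P, hP⟩ := hmin C'ᵀ ⟨by rwa [det_transpose], fun i => by
      obtain ⟨Q, hQ⟩ := hdvd' i
      exact ⟨Qᵀ, by rw [hQ, transpose_mul]⟩⟩
    exact ⟨Pᵀ, by rw [← transpose_transpose C', hP, transpose_mul, transpose_transpose]⟩

theorem stmt5_general {D L : ℕ} (N : Fin L → Matrix (Fin D) (Fin D) ℤ)
    (hns : ∀ i, (N i).det ≠ 0)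
    (hcomm : ∀ i j, N i * N j = N j * N i)
    (hcop : ∀ i j, i ≠ j → MatCoprime (N i) (N j))
    (s : List (Fin L)) (hs : s.Nodup) :
    IsLCRM (fun k : Fin s.length => N (s.get k)) ((s.map N).prod) ∧
      IsLCLM (fun k : Fin s.length => N (s.get k)) ((s.map N).prod) := by
  refine ⟨isLCRM_list_prod_map hns hcomm
    (fun i j hij => (hcop i j hij).2.exists_mul_add_mul_eq_one (hns i)) hs,
    isLCLM_of_isLCRM_transpose ?_⟩
  rw [transpose_list_prod_map hcomm]
  refine isLCRM_list_prod_map (fun i => by rw [det_transpose]; exact hns i)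
    (fun i j => Commute.transpose (hcomm i j)) (fun i j hij => ?_) hs
  exact exists_mul_transpose_add_mul_transpose_eq_one
    ((hcop i j hij).1.exists_mul_add_mul_eq_one (hns i))

/-- the product over a subset (of size ≥ 2) of a pairwise commutative and
coprime family is both an lcrm and an lclm of the members of the subset. -/
theorem stmt5 {D L : ℕ} (N : Fin L → Matrix (Fin D) (Fin D) ℤ)
    (hns : ∀ i, (N i).det ≠ 0)
    (hcomm : ∀ i j, N i * N j = N j * N i)
    (hcop : ∀ i j, i ≠ j → MatCoprime (N i) (N j))
    (s : List (Fin L)) (hs : s.Nodup) (hp : 2 ≤ s.length) :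
    IsLCRM (fun k : Fin s.length => N (s.get k)) ((s.map N).prod) ∧
      IsLCLM (fun k : Fin s.length => N (s.get k)) ((s.map N).prod) :=
  stmt5_general N hns hcomm hcop s hs
end

section
/- Let M₁, …, M_L be D×D nonsingular integer matrices and R an lcrm of them. Assume there exist pairwise commutative and coprime integer matrices N₁, …, N_L such that R = N₁N₂⋯N_L U for some unimodular matrix U and N_i is a left divisor of M_i for each i. For i with N_i not unimodular, set W_i = N₁⋯N_{i−1}N_{i+1}⋯N_L and let Ŵ_i be an integer matrix satisfying W_iŴ_i + N_iQ_i = I for some integer matrix Q_i; for i with N_i unimodular set Ŵ_i = 0. Then every integer vector m ∈ 𝒩(R) is recovered from its remainders r_i = ⟨m⟩_{M_i} by the formula m = ⟨ Σ_{i=1}^{L} W_iŴ_i r_i ⟩_R. -/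
/-
Let `s = ∑ᵢ Wᵢ Ŵᵢ rᵢ`. Modulo `Nᵢ` (on the left) every `Wⱼ` with `j ≠ i` vanishes, since `Nᵢ` is one
of its commuting factors, and `Wᵢ Ŵᵢ ≡ 1` by the Bézout identity (trivially so when `Nᵢ` is
unimodular); hence `s ≡ rᵢ ≡ m (mod Nᵢ)`. The same Bézout identity makes `N₁ ⋯ Nₖ₋₁` invertible
modulo `Nₖ`, so `LAT (N₁ ⋯ Nₖ₋₁) ∩ LAT Nₖ = LAT (N₁ ⋯ Nₖ)`, and inductively
`s - m ∈ LAT (N₁ ⋯ N_L) = LAT R`.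
-/

open Matrix

theorem Unimod.isUnit {D : ℕ} {U : Matrix (Fin D) (Fin D) ℤ} (hU : Unimod U) : IsUnit U :=
  (Matrix.isUnit_iff_isUnit_det U).2 (Int.isUnit_iff.2 hU)

theorem Unimod.exists_add_mul_eq_one {D : ℕ} {B : Matrix (Fin D) (Fin D) ℤ} (hB : Unimod B)
    (C : Matrix (Fin D) (Fin D) ℤ) : ∃ Q, C + B * Q = 1 :=
  ⟨B⁻¹ * (1 - C), by rw [← mul_assoc, mul_nonsing_inv _ ((isUnit_iff_isUnit_det B).1 hB.isUnit),
    one_mul, add_sub_cancel]⟩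

theorem finite_quotient_range_mulVecLin {n : Type*} [Fintype n] [DecidableEq n]
    {B : Matrix n n ℤ} (hB : B.det ≠ 0) : Finite ((n → ℤ) ⧸ LinearMap.range B.mulVecLin) := by
  refine Module.finite_of_fg_torsion _ fun q ↦ ?_
  obtain ⟨u, rfl⟩ := Submodule.Quotient.mk_surjective _ q
  refine ⟨⟨B.det, mem_nonZeroDivisors_of_ne_zero hB⟩, ?_⟩
  rw [Submonoid.smul_def, ← Submodule.Quotient.mk_smul, Submodule.Quotient.mk_eq_zero]
  exact ⟨B.adjugate *ᵥ u, by
    rw [mulVecLin_apply, mulVec_mulVec, mul_adjugate, smul_mulVec, one_mulVec]⟩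

section Lattice

variable {D : ℕ}

theorem mem_LAT_iff {M : Matrix (Fin D) (Fin D) ℤ} {v : Fin D → ℤ} :
    v ∈ LAT M ↔ v ∈ LinearMap.range M.mulVecLin :=
  ⟨fun ⟨n, h⟩ ↦ ⟨n, h.symm⟩, fun ⟨n, h⟩ ↦ ⟨n, h.symm⟩⟩

theorem LAT_mul_subset (B K : Matrix (Fin D) (Fin D) ℤ) : LAT (B * K) ⊆ LAT B := by
  rintro _ ⟨n, rfl⟩
  exact ⟨K *ᵥ n, (mulVec_mulVec _ _ _).symm⟩

theorem LAT_subset_LAT_mul_unimod (A : Matrix (Fin D) (Fin D) ℤ)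
    {U : Matrix (Fin D) (Fin D) ℤ} (hU : Unimod U) : LAT A ⊆ LAT (A * U) := by
  obtain ⟨V, hUV⟩ := hU.exists_add_mul_eq_one 0
  rw [zero_add] at hUV
  rintro _ ⟨n, rfl⟩
  exact ⟨V *ᵥ n, by rw [mulVec_mulVec, mul_assoc, hUV, mul_one]⟩

/- Multiplication by `A` is surjective on the finite group `ℤ^D / B ℤ^D` thanks to the Bézout
identity, hence injective. -/
theorem mem_LAT_of_mulVec_mem_LAT {A B X Y : Matrix (Fin D) (Fin D) ℤ} (hAB : Commute A B)
    (hB : B.det ≠ 0) (hbez : A * X + B * Y = 1) {a : Fin D → ℤ} (ha : A *ᵥ a ∈ LAT B) :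
    a ∈ LAT B := by
  set S := LinearMap.range B.mulVecLin
  have hS : S ≤ S.comap A.mulVecLin := by
    rintro _ ⟨x, rfl⟩
    exact ⟨A *ᵥ x, by simp only [mulVecLin_apply, mulVec_mulVec, hAB.eq]⟩
  set φ := S.mapQ S A.mulVecLin hS
  have hsurj : Function.Surjective φ := by
    intro q
    obtain ⟨u, rfl⟩ := Submodule.Quotient.mk_surjective S q
    refine ⟨Submodule.Quotient.mk (X *ᵥ u), (Submodule.Quotient.eq S).2 ⟨-(Y *ᵥ u), ?_⟩⟩
    rw [mulVecLin_apply, mulVecLin_apply, mulVec_mulVec, mulVec_neg, mulVec_mulVec,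
      eq_sub_of_add_eq hbez, sub_mulVec, one_mulVec]
    abel
  have := finite_quotient_range_mulVecLin hB
  refine mem_LAT_iff.2 <| (Submodule.Quotient.mk_eq_zero S).1 <|
    Finite.injective_iff_surjective.2 hsurj ?_
  rw [map_zero, Submodule.mapQ_apply, Submodule.Quotient.mk_eq_zero]
  exact mem_LAT_iff.1 ha

theorem mem_LAT_mul_of_bezout {A B X Y : Matrix (Fin D) (Fin D) ℤ} (hAB : Commute A B)
    (hB : B.det ≠ 0) (hbez : A * X + B * Y = 1) {v : Fin D → ℤ} (hA : v ∈ LAT A)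
    (hvB : v ∈ LAT B) : v ∈ LAT (A * B) := by
  obtain ⟨a, rfl⟩ := hA
  obtain ⟨b, rfl⟩ := mem_LAT_of_mulVec_mem_LAT hAB hB hbez hvB
  exact ⟨b, mulVec_mulVec _ _ _⟩

theorem mem_LAT_prod_of_bezout {l : List (Matrix (Fin D) (Fin D) ℤ)}
    (hcomm : ∀ a ∈ l, ∀ b ∈ l, Commute a b) (hdet : ∀ a ∈ l, a.det ≠ 0)
    (hbez : ∀ t₁ a t₂, l = t₁ ++ a :: t₂ → ∃ X Y, t₁.prod * X + a * Y = 1)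
    {v : Fin D → ℤ} (hv : ∀ a ∈ l, v ∈ LAT a) : v ∈ LAT l.prod := by
  induction l using List.reverseRecOn with
  | nil => exact ⟨v, (one_mulVec v).symm⟩
  | append_singleton t a ih =>
    have ha : a ∈ t ++ [a] := List.mem_append_right t (List.mem_singleton_self a)
    have ht : ∀ b ∈ t, b ∈ t ++ [a] := fun b hb ↦ List.mem_append_left _ hb
    obtain ⟨X, Y, hXY⟩ := hbez t a [] rfl
    rw [List.prod_append, List.prod_singleton]
    refine mem_LAT_mul_of_bezout (Commute.list_prod_left _ _ fun b hb ↦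
        hcomm b (ht b hb) a ha) (hdet a ha) hXY ?_ (hv a ha)
    refine ih (fun b hb c hc ↦ hcomm b (ht b hb) c (ht c hc)) (fun b hb ↦ hdet b (ht b hb))
      (fun t₁ b t₂ h ↦ hbez t₁ b (t₂ ++ [a]) (by simp [h])) (fun b hb ↦ hv b (ht b hb))

theorem sum_mulVec_sub_mem_LAT {ι : Type*} [Fintype ι] [DecidableEq ι]
    (A : ι → Matrix (Fin D) (Fin D) ℤ) {B Q : Matrix (Fin D) (Fin D) ℤ} {i : ι}
    (hAi : A i + B * Q = 1) (hAj : ∀ j ≠ i, ∃ K, A j = B * K)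
    {m : Fin D → ℤ} {r : ι → Fin D → ℤ} (hr : m - r i ∈ LAT B) :
    ∑ j, A j *ᵥ r j - m ∈ LAT B := by
  obtain ⟨n, hn⟩ := hr
  have hsplit : ∑ j, A j *ᵥ r j - m =
      B *ᵥ (-(Q *ᵥ r i) - n) + ∑ j ∈ Finset.univ.erase i, A j *ᵥ r j := by
    rw [← Finset.add_sum_erase _ _ (Finset.mem_univ i), eq_sub_of_add_eq hAi, mulVec_sub,
      mulVec_neg, mulVec_mulVec, ← hn, sub_mulVec, one_mulVec]
    abel
  rw [mem_LAT_iff, hsplit]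
  refine Submodule.add_mem _ ⟨_, rfl⟩ (Submodule.sum_mem _ fun j hj ↦ ?_)
  obtain ⟨K, hK⟩ := hAj j (Finset.ne_of_mem_erase hj)
  exact ⟨K *ᵥ r j, by rw [mulVecLin_apply, mulVec_mulVec, hK]⟩

end Lattice

theorem List.exists_prod_eraseIdx_eq_mul {M : Type*} [Monoid M] {l : List M}
    (hcomm : ∀ a ∈ l, ∀ b ∈ l, Commute a b) {i j : ℕ} (hi : i < l.length) (hij : i ≠ j) :
    ∃ K, (l.eraseIdx j).prod = l[i] * K := by
  classical
  have hmem : l[i] ∈ l.eraseIdx j := List.mem_eraseIdx_iff_getElem.2 ⟨i, hi, hij, rfl⟩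
  exact ⟨_, (List.prod_erase_of_comm hmem fun a ha b hb ↦
    hcomm a (List.mem_of_mem_eraseIdx ha) b (List.mem_of_mem_eraseIdx hb)).symm⟩

theorem List.exists_prefix_bezout_of_eraseIdx_bezout {α : Type*} [Semiring α] {l : List α}
    (h : ∀ k (hk : k < l.length), ∃ X Y, (l.eraseIdx k).prod * X + l[k] * Y = 1)
    {t₁ t₂ : List α} {a : α} (hl : l = t₁ ++ a :: t₂) : ∃ X Y, t₁.prod * X + a * Y = 1 := by
  subst hl
  obtain ⟨X, Y, hXY⟩ := h t₁.length (by simp)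
  rw [List.eraseIdx_append_of_length_le le_rfl, Nat.sub_self, List.eraseIdx_cons_zero,
    List.prod_append, List.getElem_append_right le_rfl] at hXY
  exact ⟨t₂.prod * X, Y, by simpa [mul_assoc] using hXY⟩

theorem stmt6_general {D L : ℕ}
    (M N : Fin L → Matrix (Fin D) (Fin D) ℤ)
    (hN : ∀ i, (N i).det ≠ 0)
    (R : Matrix (Fin D) (Fin D) ℤ)
    (hNcomm : ∀ i j, N i * N j = N j * N i)
    (U : Matrix (Fin D) (Fin D) ℤ) (hU : Unimod U)
    (hRU : R = (List.ofFn N).prod * U)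
    (hdiv : ∀ i, ∃ K : Matrix (Fin D) (Fin D) ℤ, M i = N i * K)
    (W Wh : Fin L → Matrix (Fin D) (Fin D) ℤ)
    (hW : ∀ i, W i = ((List.ofFn N).eraseIdx i.val).prod)
    (hWh : ∀ i, (¬ Unimod (N i) →
        ∃ Q : Matrix (Fin D) (Fin D) ℤ, W i * Wh i + N i * Q = 1) ∧
      (Unimod (N i) → Wh i = 0))
    (m : Fin D → ℤ) (hm : m ∈ NSet R)
    (r : Fin L → Fin D → ℤ) (hr : ∀ i, IsRem (M i) m (r i)) :
    IsRem R (∑ i, (W i * Wh i).mulVec (r i)) m := by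
  have hcomm : ∀ a ∈ List.ofFn N, ∀ b ∈ List.ofFn N, Commute a b := by
    simp only [List.forall_mem_ofFn_iff]
    exact hNcomm
  have hbez : ∀ i, ∃ Q, W i * Wh i + N i * Q = 1 := fun i ↦ by
    by_cases hu : Unimod (N i)
    · exact hu.exists_add_mul_eq_one _
    · exact (hWh i).1 hu
  have hcong : ∀ i, ∑ j, (W j * Wh j) *ᵥ r j - m ∈ LAT (N i) := fun i ↦ by
    obtain ⟨Q, hQ⟩ := hbez i
    refine sum_mulVec_sub_mem_LAT (fun j ↦ W j * Wh j) hQ (fun j hji ↦ ?_) ?_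
    · obtain ⟨K, hK⟩ := List.exists_prod_eraseIdx_eq_mul hcomm (i := i) (by simp)
        (Fin.val_ne_of_ne hji.symm)
      exact ⟨K * Wh j, by rw [hW, hK, List.getElem_ofFn, mul_assoc]⟩
    · obtain ⟨K, hK⟩ := hdiv i
      exact LAT_mul_subset _ K (hK ▸ (hr i).2)
  refine ⟨hm, hRU ▸ LAT_subset_LAT_mul_unimod _ hU (mem_LAT_prod_of_bezout hcomm ?_ ?_ ?_)⟩
  · simpa [List.forall_mem_ofFn_iff] using hN
  · refine fun t₁ a t₂ ↦ List.exists_prefix_bezout_of_eraseIdx_bezout fun k hk ↦ ?_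
    obtain ⟨Q, hQ⟩ := hbez ⟨k, by simpa using hk⟩
    exact ⟨Wh _, Q, by rw [List.getElem_ofFn, ← hQ, hW]⟩
  · simpa [List.forall_mem_ofFn_iff] using hcong

/-- reconstruction formula of the MD-CRT (Corollary 1):
`m = ⟨ Σᵢ Wᵢ Ŵᵢ rᵢ ⟩_R`. -/
theorem stmt6 {D L : ℕ} (hL : 1 ≤ L)
    (M N : Fin L → Matrix (Fin D) (Fin D) ℤ)
    (hM : ∀ i, (M i).det ≠ 0) (hN : ∀ i, (N i).det ≠ 0)
    (R : Matrix (Fin D) (Fin D) ℤ) (hR : IsLCRM M R)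
    (hNcomm : ∀ i j, N i * N j = N j * N i)
    (hNcop : ∀ i j, i ≠ j → MatCoprime (N i) (N j))
    (U : Matrix (Fin D) (Fin D) ℤ) (hU : Unimod U)
    (hRU : R = (List.ofFn N).prod * U)
    (hdiv : ∀ i, ∃ K : Matrix (Fin D) (Fin D) ℤ, M i = N i * K)
    (W Wh : Fin L → Matrix (Fin D) (Fin D) ℤ)
    (hW : ∀ i, W i = ((List.ofFn N).eraseIdx i.val).prod)
    (hWh : ∀ i, (¬ Unimod (N i) →
        ∃ Q : Matrix (Fin D) (Fin D) ℤ, W i * Wh i + N i * Q = 1) ∧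
      (Unimod (N i) → Wh i = 0))
    (m : Fin D → ℤ) (hm : m ∈ NSet R)
    (r : Fin L → Fin D → ℤ) (hr : ∀ i, IsRem (M i) m (r i)) :
    IsRem R (∑ i, (W i * Wh i).mulVec (r i)) m :=
  stmt6_general M N hN R hNcomm U hU hRU hdiv W Wh hW hWh m hm r hr
end

section
/- Let M be a D×D unimodular matrix, let Γ₁, …, Γ_L be D×D nonsingular integer matrices that are pairwise commutative and pairwise coprime, set M_i = MΓ_i, and let R = MΓ₁Γ₂⋯Γ_L U for a unimodular matrix U (an lcrm of the M_i). For each i set W_i = MΓ₁⋯Γ_{i−1}Γ_{i+1}⋯Γ_L and let Ŵ_i be an integer matrix satisfying W_iŴ_i + M_iQ_i = I for some integer matrix Q_i. Then every integer vector m ∈ 𝒩(R) is recovered from its remainders r_i = ⟨m⟩_{M_i} by m = ⟨ Σ_{i=1}^{L} W_iŴ_i r_i ⟩_R. -/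
open Matrix

/-
The vector `Wᵢ Ŵᵢ rᵢ` is congruent to `m` modulo `MΓᵢ` (by the Bézout identity defining `Ŵᵢ`) and
to `0` modulo `MΓⱼ` for `j ≠ i` (since the commuting `Γⱼ` divides `Wᵢ`), so the sum is congruent
to `m` modulo every `MΓⱼ`. Cancelling the unimodular `M`, it remains to see that the lattices
`LAT(Γⱼ)` intersect in `LAT(Γ₁ ⋯ Γ_L)`. For two commuting factors `A`, `B` with
`LAT(A) + LAT(B) = ℤ^D` this is an index count: `LAT(A) ∩ LAT(B)` has index `|det A| |det B|`,
which is the index of the smaller lattice `LAT(AB)`. The Bézout identity makes each `Γᵢ`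
comaximal in this sense with the product of the others, so induction on the factors finishes;
the unimodular `U` does not change `LAT(R)`.
-/

theorem AddSubgroup.index_inf_of_sup_eq_top {G : Type*} [AddCommGroup G] {H K : AddSubgroup G}
    (h : H ⊔ K = ⊤) : (H ⊓ K).index = H.index * K.index := by
  rw [← AddSubgroup.relIndex_mul_index (inf_le_right : H ⊓ K ≤ K),
    AddSubgroup.inf_relIndex_right, ← AddSubgroup.relIndex_sup_left K H, h,
    AddSubgroup.relIndex_top_right, mul_comm]

namespace Matrix

variable {n : Type*} [Fintype n]

def intLattice (M : Matrix n n ℤ) : AddSubgroup (n → ℤ) :=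
  (LinearMap.range M.mulVecLin).toAddSubgroup

theorem mem_intLattice {M : Matrix n n ℤ} {x : n → ℤ} : x ∈ intLattice M ↔ ∃ y, M *ᵥ y = x :=
  Iff.rfl

theorem mulVec_mem_intLattice (M : Matrix n n ℤ) (y : n → ℤ) : M *ᵥ y ∈ intLattice M :=
  ⟨y, rfl⟩

theorem mem_intLattice_iff_mem_LAT {D : ℕ} {M : Matrix (Fin D) (Fin D) ℤ} {x : Fin D → ℤ} :
    x ∈ intLattice M ↔ x ∈ LAT M := by
  simp only [mem_intLattice, LAT, Set.mem_ofPred_eq, eq_comm]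

theorem intLattice_mul_le (A B : Matrix n n ℤ) : intLattice (A * B) ≤ intLattice A := by
  intro x hx
  obtain ⟨y, rfl⟩ := mem_intLattice.mp hx
  exact mem_intLattice.mpr ⟨B *ᵥ y, mulVec_mulVec y A B⟩

variable [DecidableEq n]

theorem intLattice_mul_of_isUnit_det {U : Matrix n n ℤ} (A : Matrix n n ℤ) (hU : IsUnit U.det) :
    intLattice (A * U) = intLattice A := by
  refine le_antisymm (intLattice_mul_le A U) ?_
  intro x hx
  obtain ⟨y, rfl⟩ := mem_intLattice.mp hx
  exact mem_intLattice.mpr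
    ⟨U⁻¹ *ᵥ y, by rw [mulVec_mulVec, mul_assoc, mul_nonsing_inv U hU, mul_one]⟩

theorem mem_intLattice_mul_iff {M : Matrix n n ℤ} (A : Matrix n n ℤ) (hM : IsUnit M.det)
    {x : n → ℤ} : x ∈ intLattice (M * A) ↔ M⁻¹ *ᵥ x ∈ intLattice A := by
  simp only [mem_intLattice]
  constructor
  · rintro ⟨y, rfl⟩
    exact ⟨y, by rw [mulVec_mulVec, ← mul_assoc, nonsing_inv_mul M hM, one_mul]⟩
  · rintro ⟨y, hy⟩
    exact ⟨y, by rw [← mulVec_mulVec, hy, mulVec_mulVec, mul_nonsing_inv M hM, one_mulVec]⟩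

theorem index_intLattice {M : Matrix n n ℤ} (hM : M.det ≠ 0) :
    (intLattice M).index = M.det.natAbs := by
  let e := LinearEquiv.ofInjective M.mulVecLin (mulVec_injective_of_det_ne_zero hM)
  have hcomp : (LinearMap.range M.mulVecLin).subtype ∘ₗ (e : (n → ℤ) →+ _).toIntLinearMap =
      toLin' M := by
    ext; rfl
  change Nat.card ((n → ℤ) ⧸ LinearMap.range M.mulVecLin) = _
  rw [← Submodule.natAbs_det_equiv _ e, hcomp, LinearMap.det_toLin']

theorem intLattice_sup_eq_top {A B X Y : Matrix n n ℤ} (h : A * X + B * Y = 1) :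
    intLattice A ⊔ intLattice B = ⊤ := by
  refine eq_top_iff.mpr fun x _ ↦ ?_
  have hx : A *ᵥ (X *ᵥ x) + B *ᵥ (Y *ᵥ x) = x := by
    rw [mulVec_mulVec, mulVec_mulVec, ← add_mulVec, h, one_mulVec]
  exact hx ▸ AddSubgroup.add_mem_sup (mulVec_mem_intLattice A _) (mulVec_mem_intLattice B _)

theorem intLattice_sup_eq_top_of_mul_left {M A B X Y : Matrix n n ℤ}
    (h : M * A * X + M * B * Y = 1) : intLattice A ⊔ intLattice B = ⊤ := by
  have hM : M * (A * X + B * Y) = 1 := by rwa [mul_add, ← mul_assoc, ← mul_assoc]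
  refine intLattice_sup_eq_top (X := X * M) (Y := Y * M) ?_
  rw [← mul_assoc, ← mul_assoc, ← add_mul, mul_eq_one_comm.mp hM]

theorem intLattice_inf_eq_mul {A B : Matrix n n ℤ} (hA : A.det ≠ 0) (hB : B.det ≠ 0)
    (hAB : Commute A B) (hsup : intLattice A ⊔ intLattice B = ⊤) :
    intLattice A ⊓ intLattice B = intLattice (A * B) := by
  have hle : intLattice (A * B) ≤ intLattice A ⊓ intLattice B :=
    le_inf (intLattice_mul_le A B) (hAB.eq ▸ intLattice_mul_le B A)
  have hAB₀ : (A * B).det ≠ 0 := by rw [det_mul]; exact mul_ne_zero hA hB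
  have hindex : (intLattice (A * B)).index = (intLattice A ⊓ intLattice B).index := by
    rw [AddSubgroup.index_inf_of_sup_eq_top hsup, index_intLattice hA, index_intLattice hB,
      index_intLattice hAB₀, det_mul, Int.natAbs_mul]
  have : (intLattice (A * B)).FiniteIndex :=
    ⟨by rw [index_intLattice hAB₀]; exact Int.natAbs_ne_zero.mpr hAB₀⟩
  by_contra hne
  exact (AddSubgroup.index_strictAnti (lt_of_le_of_ne hle (Ne.symm hne))).ne hindex.symm

theorem det_list_prod_ne_zero {l : List (Matrix n n ℤ)} (hdet : ∀ A ∈ l, A.det ≠ 0) :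
    l.prod.det ≠ 0 :=
  List.prod_induction (fun A : Matrix n n ℤ ↦ A.det ≠ 0)
    (fun A B hA hB ↦ by rw [det_mul]; exact mul_ne_zero hA hB) (by rw [det_one]; exact one_ne_zero)
    hdet

theorem mem_intLattice_prod_of_forall_mem {l : List (Matrix n n ℤ)} (hcomm : l.Pairwise Commute)
    (hdet : ∀ A ∈ l, A.det ≠ 0)
    (hcop : ∀ i (hi : i < l.length), intLattice (l.eraseIdx i).prod ⊔ intLattice l[i] = ⊤)
    {x : n → ℤ} (hx : ∀ A ∈ l, x ∈ intLattice A) : x ∈ intLattice l.prod := by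
  induction l with
  | nil => exact mem_intLattice.mpr ⟨x, one_mulVec x⟩
  | cons a t ih =>
    obtain ⟨ha, ht⟩ := List.pairwise_cons.mp hcomm
    have htail : x ∈ intLattice t.prod := by
      refine ih ht (fun A hA ↦ hdet A (List.mem_cons_of_mem a hA)) (fun i hi ↦ ?_)
        (fun A hA ↦ hx A (List.mem_cons_of_mem a hA))
      have hP : Commute a (t.eraseIdx i).prod :=
        Commute.list_prod_right _ _ fun B hB ↦ ha B (List.mem_of_mem_eraseIdx hB)
      refine eq_top_iff.mpr ((hcop (i + 1) (by simpa using hi)).ge.trans (sup_le_sup_right ?_ _))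
      simpa only [List.eraseIdx_cons_succ, List.prod_cons, hP.eq] using
        intLattice_mul_le (t.eraseIdx i).prod a
    have hsup : intLattice a ⊔ intLattice t.prod = ⊤ := by
      rw [sup_comm]
      exact hcop 0 (Nat.zero_lt_succ _)
    have hinf := intLattice_inf_eq_mul (hdet a List.mem_cons_self)
      (det_list_prod_ne_zero fun A hA ↦ hdet A (List.mem_cons_of_mem a hA))
      (Commute.list_prod_right _ _ ha) hsup
    rw [List.prod_cons, ← hinf]
    exact ⟨hx a List.mem_cons_self, htail⟩

theorem intLattice_mul_list_prod_mul_le (M X : Matrix n n ℤ) {l : List (Matrix n n ℤ)}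
    (hcomm : ∀ A ∈ l, ∀ B ∈ l, Commute A B) {A : Matrix n n ℤ} (hA : A ∈ l) :
    intLattice (M * l.prod * X) ≤ intLattice (M * A) := by
  classical
  rw [← List.prod_erase_of_comm hA fun A hA B hB ↦ (hcomm A hA B hB).eq, ← mul_assoc,
    mul_assoc _ _ X]
  exact intLattice_mul_le _ _

theorem sum_mulVec_sub_mem_intLattice {ι : Type*} [Fintype ι] [DecidableEq ι]
    {P K : ι → Matrix n n ℤ} (hdiag : ∀ j, ∃ Q, P j + K j * Q = 1)
    (hoff : ∀ i j, i ≠ j → intLattice (P i) ≤ intLattice (K j))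
    {m : n → ℤ} {r : ι → n → ℤ} (hr : ∀ j, m - r j ∈ intLattice (K j)) (j : ι) :
    ∑ i, P i *ᵥ r i - m ∈ intLattice (K j) := by
  obtain ⟨Q, hQ⟩ := hdiag j
  have hPj : P j *ᵥ r j - m = -(m - r j) - K j *ᵥ (Q *ᵥ r j) := by
    rw [eq_sub_of_add_eq hQ, sub_mulVec, one_mulVec, mulVec_mulVec]
    abel
  rw [← Finset.add_sum_erase _ _ (Finset.mem_univ j), add_sub_right_comm, hPj]
  exact add_mem (sub_mem (neg_mem (hr j)) (mulVec_mem_intLattice _ _))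
    (sum_mem fun i hi ↦ hoff i j (Finset.ne_of_mem_erase hi) (mulVec_mem_intLattice _ _))

end Matrix

theorem stmt9_general {D L : ℕ}
    (M : Matrix (Fin D) (Fin D) ℤ) (hM : Unimod M)
    (Γ : Fin L → Matrix (Fin D) (Fin D) ℤ) (hΓ : ∀ i, (Γ i).det ≠ 0)
    (hcomm : ∀ i j, Γ i * Γ j = Γ j * Γ i)
    (U : Matrix (Fin D) (Fin D) ℤ) (hU : Unimod U)
    (R : Matrix (Fin D) (Fin D) ℤ) (hR : R = M * (List.ofFn Γ).prod * U)
    (W Wh : Fin L → Matrix (Fin D) (Fin D) ℤ)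
    (hW : ∀ i, W i = M * ((List.ofFn Γ).eraseIdx i.val).prod)
    (hWh : ∀ i, ∃ Q : Matrix (Fin D) (Fin D) ℤ, W i * Wh i + (M * Γ i) * Q = 1)
    (m : Fin D → ℤ) (hm : m ∈ NSet R)
    (r : Fin L → Fin D → ℤ) (hr : ∀ i, IsRem (M * Γ i) m (r i)) :
    IsRem R (∑ i, (W i * Wh i).mulVec (r i)) m := by
  have hMunit : IsUnit M.det := Int.isUnit_iff.mpr hM
  have hΓcomm : ∀ A ∈ List.ofFn Γ, ∀ B ∈ List.ofFn Γ, Commute A B := by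
    simp only [List.mem_ofFn]
    rintro _ ⟨i, rfl⟩ _ ⟨j, rfl⟩
    exact hcomm i j
  have hmod : ∀ j, ∑ i, (W i * Wh i) *ᵥ r i - m ∈ intLattice (M * Γ j) := by
    refine sum_mulVec_sub_mem_intLattice hWh (fun i j hij ↦ ?_)
      fun j ↦ mem_intLattice_iff_mem_LAT.mpr (hr j).2
    rw [hW i]
    refine intLattice_mul_list_prod_mul_le M (Wh i)
      (fun A hA B hB ↦ hΓcomm A (List.mem_of_mem_eraseIdx hA) B (List.mem_of_mem_eraseIdx hB))
      (List.mem_eraseIdx_iff_getElem.mpr ⟨j, by simp, Fin.val_ne_of_ne hij.symm, by simp⟩)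
  have hcop : ∀ k (hk : k < (List.ofFn Γ).length),
      intLattice ((List.ofFn Γ).eraseIdx k).prod ⊔ intLattice (List.ofFn Γ)[k] = ⊤ := by
    intro k hk
    rw [List.length_ofFn] at hk
    obtain ⟨Q, hQ⟩ := hWh ⟨k, hk⟩
    rw [hW] at hQ
    rw [List.getElem_ofFn]
    exact intLattice_sup_eq_top_of_mul_left hQ
  refine ⟨hm, mem_intLattice_iff_mem_LAT.mp ?_⟩
  rw [hR, intLattice_mul_of_isUnit_det _ (Int.isUnit_iff.mpr hU), mem_intLattice_mul_iff _ hMunit]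
  refine mem_intLattice_prod_of_forall_mem (List.pairwise_of_forall_mem_list hΓcomm) ?_ hcop ?_
  · simpa only [List.mem_ofFn, forall_exists_index, forall_apply_eq_imp_iff] using hΓ
  · simpa only [List.mem_ofFn, forall_exists_index, forall_apply_eq_imp_iff,
      ← mem_intLattice_mul_iff _ hMunit] using hmod

/-- reconstruction formula (Corollary 2) with `M` unimodular:
`m = ⟨ Σᵢ Wᵢ Ŵᵢ rᵢ ⟩_R`. -/
theorem stmt9 {D L : ℕ} (hL : 1 ≤ L)
    (M : Matrix (Fin D) (Fin D) ℤ) (hM : Unimod M)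
    (Γ : Fin L → Matrix (Fin D) (Fin D) ℤ) (hΓ : ∀ i, (Γ i).det ≠ 0)
    (hcomm : ∀ i j, Γ i * Γ j = Γ j * Γ i)
    (hcop : ∀ i j, i ≠ j → MatCoprime (Γ i) (Γ j))
    (U : Matrix (Fin D) (Fin D) ℤ) (hU : Unimod U)
    (R : Matrix (Fin D) (Fin D) ℤ) (hR : R = M * (List.ofFn Γ).prod * U)
    (W Wh : Fin L → Matrix (Fin D) (Fin D) ℤ)
    (hW : ∀ i, W i = M * ((List.ofFn Γ).eraseIdx i.val).prod)
    (hWh : ∀ i, ∃ Q : Matrix (Fin D) (Fin D) ℤ, W i * Wh i + (M * Γ i) * Q = 1)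
    (m : Fin D → ℤ) (hm : m ∈ NSet R)
    (r : Fin L → Fin D → ℤ) (hr : ∀ i, IsRem (M * Γ i) m (r i)) :
    IsRem R (∑ i, (W i * Wh i).mulVec (r i)) m :=
  stmt9_general M hM Γ hΓ hcomm U hU R hR W Wh hW hWh m hm r hr
end

section
/- Let Λ₁, …, Λ_L be D×D nonsingular diagonal integer matrices, let V be a D×D unimodular matrix, and let Λ be the diagonal integer matrix whose j-th diagonal entry Λ(j,j) is the least common multiple of Λ₁(j,j), Λ₂(j,j), …, Λ_L(j,j) for each 1 ≤ j ≤ D. Then Λ is an lcrm of the matrices Λ₁V, Λ₂V, …, Λ_LV. -/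
open Matrix

/-- the diagonal matrix of columnwise lcm's is an lcrm of the `ΛᵢV`. -/
theorem stmt11 {D L : ℕ} (hL : 1 ≤ L)
    (d : Fin L → Fin D → ℤ) (hd : ∀ i j, d i j ≠ 0)
    (V : Matrix (Fin D) (Fin D) ℤ) (hV : Unimod V) :
    IsLCRM (fun i => Matrix.diagonal (d i) * V)
      (Matrix.diagonal (fun j => Finset.univ.lcm (fun i => d i j))) := by
  classical
  set l : Fin D → ℤ := fun j => Finset.univ.lcm (fun i => d i j) with hl
  have hlne : ∀ j, l j ≠ 0 := by
    intro j h
    rw [hl] at h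
    rcases (Finset.lcm_eq_zero_iff).1 h with ⟨i, -, hi⟩
    exact hd i j hi
  have hdvd : ∀ i j, d i j ∣ l j := fun i j =>
    Finset.dvd_lcm (Finset.mem_univ i)
  have hdetL : (Matrix.diagonal l).det ≠ 0 := by
    rw [Matrix.det_diagonal]
    exact Finset.prod_ne_zero_iff.2 fun j _ => hlne j
  -- inverse of V
  set W : Matrix (Fin D) (Fin D) ℤ := V.det • V.adjugate with hW
  have hVW : V * W = 1 := by
    rw [hW, Matrix.mul_smul, Matrix.mul_adjugate, smul_smul]
    rcases hV with h | h <;> simp [h]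
  constructor
  · refine ⟨hdetL, fun i => ?_⟩
    refine ⟨W * Matrix.diagonal (fun j => l j / d i j), ?_⟩
    calc Matrix.diagonal l
        = Matrix.diagonal (d i) * Matrix.diagonal (fun j => l j / d i j) := by
          rw [Matrix.diagonal_mul_diagonal]
          have : (fun j => d i j * (l j / d i j)) = l :=
            funext fun j => Int.mul_ediv_cancel' (hdvd i j)
          rw [this]
      _ = Matrix.diagonal (d i) * (V * W) * Matrix.diagonal (fun j => l j / d i j) := by
          rw [hVW, Matrix.mul_one]
      _ = Matrix.diagonal (d i) * V * (W * Matrix.diagonal (fun j => l j / d i j)) := by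
          simp only [Matrix.mul_assoc]
  · rintro C' ⟨hC'det, hC'⟩
    have key : ∀ j k, l j ∣ C' j k := by
      intro j k
      rw [hl]
      refine Finset.lcm_dvd fun i _ => ?_
      obtain ⟨Q, hQ⟩ := hC' i
      rw [hQ, Matrix.mul_assoc, Matrix.diagonal_mul]
      exact Dvd.intro _ rfl
    refine ⟨Matrix.of fun j k => C' j k / l j, ?_⟩
    ext j k
    rw [Matrix.diagonal_mul]
    exact (Int.mul_ediv_cancel' (key j k)).symm
end

section
/- Let P be the 2×2 integer circulant matrix with diagonal entries p and off-diagonal entries q, where p, q are integers and q ≠ 0. Then P cannot be written as P = UΛU⁻¹ where U is a 2×2 unimodular matrix and Λ is a 2×2 diagonal integer matrix. -/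
open Matrix

/-- a 2×2 integer circulant matrix `[[p,q],[q,p]]` with `q ≠ 0` cannot be
diagonalized as `UΛU⁻¹` with `U` unimodular and `Λ` a diagonal integer matrix. -/
theorem stmt13 (p q : ℤ) (hq : q ≠ 0) :
    ¬ ∃ (U : Matrix (Fin 2) (Fin 2) ℤ) (d : Fin 2 → ℤ),
        Unimod U ∧ !![p, q; q, p] = U * Matrix.diagonal d * U⁻¹ := by

  rintro ⟨U, d, hU, hP⟩
  have hdet : IsUnit U.det := by
    rcases hU with h | h <;> simp [h, Int.isUnit_iff]
  have h1 : !![p, q; q, p] * U = U * Matrix.diagonal d := by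
    rw [hP, Matrix.mul_assoc, Matrix.mul_assoc, Matrix.nonsing_inv_mul U hdet, Matrix.mul_one]
  set a := U 0 0 with ha
  set b := U 0 1 with hb
  set c := U 1 0 with hc
  set e := U 1 1 with he
  have e00 := congrFun (congrFun h1 0) 0
  have e01 := congrFun (congrFun h1 0) 1
  have e10 := congrFun (congrFun h1 1) 0
  have e11 := congrFun (congrFun h1 1) 1
  simp [Matrix.mul_apply, Fin.sum_univ_two, Matrix.diagonal] at e00 e01 e10 e11
  have hdet2 : a * e - b * c = 1 ∨ a * e - b * c = -1 := by
    have h := hU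
    rwa [Unimod, Matrix.det_fin_two] at h
  have hac : a = c ∨ a = -c := by
    by_contra h
    push_neg at h
    have h1' : (a - c) * (p - q - d 0) = 0 := by linear_combination e00 - e10
    have h2' : (a + c) * (p + q - d 0) = 0 := by linear_combination e00 + e10
    rcases mul_eq_zero.mp h1' with h' | h'
    · exact h.1 (by linarith)
    rcases mul_eq_zero.mp h2' with h'' | h''
    · exact h.2 (by linarith)
    exact hq (by linarith)
  have hbd : b = e ∨ b = -e := by
    by_contra h
    push_neg at h
    have h1' : (b - e) * (p - q - d 1) = 0 := by linear_combination e01 - e11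
    have h2' : (b + e) * (p + q - d 1) = 0 := by linear_combination e01 + e11
    rcases mul_eq_zero.mp h1' with h' | h'
    · exact h.1 (by linarith)
    rcases mul_eq_zero.mp h2' with h'' | h''
    · exact h.2 (by linarith)
    exact hq (by linarith)
  set t := a * b with ht
  rcases hac with h1' | h1' <;> rcases hbd with h2' | h2'
  · have hz : a * e - b * c = 0 := by rw [← h1', ← h2']; ring
    rw [hz] at hdet2; omega
  · have hz : a * e - b * c = -(2 * t) := by
      have hec : e = -b := by linarith
      rw [← h1', hec, ht]; ring
    rw [hz] at hdet2; omega
  · have hz : a * e - b * c = 2 * t := by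
      have hca : c = -a := by linarith
      rw [hca, ← h2', ht]; ring
    rw [hz] at hdet2; omega
  · have hz : a * e - b * c = 0 := by
      have hca : c = -a := by linarith
      have hec : e = -b := by linarith
      rw [hca, hec]; ring
    rw [hz] at hdet2; omega
end

section
/- Let M be a D×D unimodular matrix and let Γ₁, …, Γ_L be D×D nonsingular integer matrices that are pairwise commutative and pairwise coprime. Then for each 1 ≤ i ≤ L, the matrices W_i = MΓ₁⋯Γ_{i−1}Γ_{i+1}⋯Γ_L and M_i = MΓ_i are left coprime, i.e., every common left divisor of W_i and M_i is unimodular. -/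
open Matrix

/-! For a nonsingular `A`, left coprimality of `A` and `B` says exactly that the columns of `A`
and `B` together generate `ℤ^D`: since `ℤ` is a PID, the lattice `Aℤ^D + Bℤ^D` is the column
lattice of some nonsingular `C`, which is then a common left divisor. This spanning condition
survives products of commuting factors, because `AB = BA` gives
`Bℤ^D = B(Aℤ^D + Pℤ^D) ⊆ Aℤ^D + BPℤ^D`, and left multiplication by a unimodular matrix. -/

namespace Matrix

variable {ι R : Type*} [Fintype ι] [CommRing R]

def colSpan (A : Matrix ι ι R) : Submodule R (ι → R) :=
  LinearMap.range A.mulVecLin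

theorem colSpan_mul (A B : Matrix ι ι R) : colSpan (A * B) = (colSpan B).map A.mulVecLin := by
  rw [colSpan, mulVecLin_mul, LinearMap.range_comp, colSpan]

variable [DecidableEq ι] {A B C P : Matrix ι ι R}

theorem exists_eq_mul_iff_colSpan_le : (∃ K, A = C * K) ↔ colSpan A ≤ colSpan C := by
  constructor
  · rintro ⟨K, rfl⟩ v ⟨x, rfl⟩
    exact ⟨K *ᵥ x, by simp [mulVecLin_mul]⟩
  · intro h
    choose k hk using fun j => h ⟨Pi.single j 1, rfl⟩
    refine ⟨of fun r c => k c r, ?_⟩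
    ext r j
    simpa [mul_apply, mulVec, dotProduct, Pi.single_apply] using (congrFun (hk j) r).symm

theorem colSpan_one : colSpan (1 : Matrix ι ι R) = ⊤ := by
  rw [colSpan, mulVecLin_one, LinearMap.range_id]

theorem colSpan_eq_top_iff : colSpan A = ⊤ ↔ IsUnit A := by
  rw [eq_top_iff, ← colSpan_one, ← exists_eq_mul_iff_colSpan_le]
  constructor
  · rintro ⟨K, hK⟩
    exact IsUnit.of_mul_eq_one K hK.symm
  · intro h
    obtain ⟨K, hK⟩ := h.exists_right_inv
    exact ⟨K, hK.symm⟩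

theorem colSpan_sup_mul_eq_top (hAB : Commute A B) (hB : colSpan A ⊔ colSpan B = ⊤)
    (hP : colSpan A ⊔ colSpan P = ⊤) : colSpan A ⊔ colSpan (B * P) = ⊤ := by
  have hB_le : colSpan B ≤ colSpan A ⊔ colSpan (B * P) :=
    calc colSpan B = (colSpan A ⊔ colSpan P).map B.mulVecLin := by
          rw [hP, Submodule.map_top, colSpan]
      _ = colSpan (A * B) ⊔ colSpan (B * P) := by
          rw [Submodule.map_sup, ← colSpan_mul, ← colSpan_mul, hAB.eq]
      _ ≤ colSpan A ⊔ colSpan (B * P) :=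
          sup_le_sup_right (exists_eq_mul_iff_colSpan_le.1 ⟨B, rfl⟩) _
  rw [eq_top_iff, ← hB]
  exact sup_le le_sup_left hB_le

theorem colSpan_sup_list_prod_eq_top {l : List (Matrix ι ι R)}
    (hl : ∀ X ∈ l, Commute A X ∧ colSpan A ⊔ colSpan X = ⊤) :
    colSpan A ⊔ colSpan l.prod = ⊤ :=
  (List.prod_induction (fun X => Commute A X ∧ colSpan A ⊔ colSpan X = ⊤)
    (fun _ _ hB hP => ⟨hB.1.mul_right hP.1, colSpan_sup_mul_eq_top hB.1 hB.2 hP.2⟩)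
    ⟨Commute.one_right A, by rw [colSpan_one, sup_top_eq]⟩ hl).2

theorem colSpan_mul_sup_mul_eq_top {M : Matrix ι ι R} (hM : IsUnit M)
    (h : colSpan A ⊔ colSpan B = ⊤) : colSpan (M * A) ⊔ colSpan (M * B) = ⊤ := by
  rw [colSpan_mul, colSpan_mul, ← Submodule.map_sup, h, Submodule.map_top, ← colSpan,
    colSpan_eq_top_iff]
  exact hM

theorem exists_colSpan_eq [IsDomain R] [IsPrincipalIdealRing R]
    (N : Submodule R (ι → R)) : ∃ C : Matrix ι ι R, colSpan C = N := by
  -- `N` is free of rank `n ≤ |ι|`, hence the image of `ι → R` restricted to `n` coordinates.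
  obtain ⟨n, b⟩ := Submodule.basisOfPid (Pi.basisFun R ι) N
  have hn : n ≤ Fintype.card ι := by
    simpa [Module.finrank_eq_card_basis b] using N.finrank_le
  let e : Fin n ↪ ι := (Fin.castLEEmb hn).trans (Fintype.equivFin ι).symm.toEmbedding
  let f : (ι → R) →ₗ[R] ι → R :=
    N.subtype ∘ₗ b.equivFun.symm.toLinearMap ∘ₗ LinearMap.funLeft R R e
  refine ⟨LinearMap.toMatrix' f, ?_⟩
  rw [colSpan, ← toLin'_apply', toLin'_toMatrix', LinearMap.range_comp_of_range_eq_top,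
    Submodule.range_subtype]
  exact LinearMap.range_eq_top.2
    (b.equivFun.symm.surjective.comp (LinearMap.funLeft_surjective_of_injective _ _ e e.injective))

end Matrix

section IntegerMatrices

variable {D : ℕ} {A B : Matrix (Fin D) (Fin D) ℤ}

theorem unimod_iff_isUnit {U : Matrix (Fin D) (Fin D) ℤ} : Unimod U ↔ IsUnit U := by
  rw [Unimod, isUnit_iff_isUnit_det, Int.isUnit_iff]

theorem leftCoprime_of_colSpan_sup_eq_top (h : colSpan A ⊔ colSpan B = ⊤) : LeftCoprime A B := by
  rintro C - hA hB
  rw [unimod_iff_isUnit, ← colSpan_eq_top_iff, eq_top_iff, ← h]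
  exact sup_le (exists_eq_mul_iff_colSpan_le.1 hA) (exists_eq_mul_iff_colSpan_le.1 hB)

theorem LeftCoprime.colSpan_sup_eq_top (hA : A.det ≠ 0) (h : LeftCoprime A B) :
    colSpan A ⊔ colSpan B = ⊤ := by
  obtain ⟨C, hC⟩ := exists_colSpan_eq (colSpan A ⊔ colSpan B)
  obtain ⟨K, hK⟩ := exists_eq_mul_iff_colSpan_le.2 (hC ▸ le_sup_left : colSpan A ≤ colSpan C)
  obtain ⟨K', hK'⟩ := exists_eq_mul_iff_colSpan_le.2 (hC ▸ le_sup_right : colSpan B ≤ colSpan C)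
  have hC_det : C.det ≠ 0 := fun h0 => hA (by rw [hK, det_mul, h0, zero_mul])
  rw [← hC, colSpan_eq_top_iff, ← unimod_iff_isUnit]
  exact h C hC_det ⟨K, hK⟩ ⟨K', hK'⟩

end IntegerMatrices

/-- with `M` unimodular and `Γ₁,…,Γ_L` pairwise commutative and coprime,
`Wᵢ = MΓ₁⋯Γ_{i−1}Γ_{i+1}⋯Γ_L` and `Mᵢ = MΓᵢ` are left coprime. -/
theorem stmt19 {D L : ℕ} (M : Matrix (Fin D) (Fin D) ℤ) (hM : Unimod M)
    (Γ : Fin L → Matrix (Fin D) (Fin D) ℤ) (hΓ : ∀ i, (Γ i).det ≠ 0)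
    (hcomm : ∀ i j, Γ i * Γ j = Γ j * Γ i)
    (hcop : ∀ i j, i ≠ j → MatCoprime (Γ i) (Γ j))
    (i : Fin L) :
    LeftCoprime (M * ((List.ofFn Γ).eraseIdx i.val).prod) (M * Γ i) := by
  have h_others : ∀ X ∈ (List.ofFn Γ).eraseIdx i,
      Commute (Γ i) X ∧ colSpan (Γ i) ⊔ colSpan X = ⊤ := by
    intro X hX
    obtain ⟨j, hj, hji, rfl⟩ := List.mem_eraseIdx_iff_getElem.1 hX
    rw [List.getElem_ofFn]
    have hne : i ≠ ⟨j, by simpa using hj⟩ := fun h => hji (by rw [h])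
    exact ⟨hcomm i _, (hcop i _ hne).1.colSpan_sup_eq_top (hΓ i)⟩
  apply leftCoprime_of_colSpan_sup_eq_top
  rw [sup_comm]
  exact colSpan_mul_sup_mul_eq_top (unimod_iff_isUnit.1 hM) (colSpan_sup_list_prod_eq_top h_others)
end
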